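/- arXiv:1905.09062 — 6 statements merged into one kernel-verified Lean document; each statement's English description precedes it below -/
import Mathlib

section
/- Let d ≥ 1, n ≥ 1, and let A be a symmetric positive definite d×d real matrix. Then the symmetrized n-fold tensor product S^{2n}(⊗^n A) ∈ Sym^{2n}(ℝ^d) is positive definite; that is, for every nonzero ξ ∈ Sym^n(ℝ^d) one has Σ_{i_1,…,i_{2n}=1}^d (S^{2n}(⊗^n A))_{i_1⋯i_{2n}} ξ_{i_1⋯i_n} ξ_{i_{n+1}⋯i_{2n}} > 0. (This is Lemma 5.4.2 of the paper, which in particular implies Lemma 3.1: the homogenized tensor a^0 is a symmetric positive definite matrix, so S^{2n}(⊗^n a^0) is positive definite.) -/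
/-- A tensor of order `n` over `ℝ^d`: a map assigning a real number to each
multi-index `(i_1, …, i_n) ∈ {1,…,d}^n`. -/
abbrev Ten (d n : ℕ) := (Fin n → Fin d) → ℝ

/-- A tensor is symmetric if it is invariant under every permutation of its indices. -/
def IsSymTen {d n : ℕ} (q : Ten d n) : Prop :=
  ∀ (σ : Equiv.Perm (Fin n)) (i : Fin n → Fin d), q (i ∘ σ) = q i

/-- The symmetrization operator `S^n`:
`(S^n q)_{i_1⋯i_n} = (1/n!) Σ_{σ ∈ 𝔖_n} q_{i_{σ(1)}⋯i_{σ(n)}}`. -/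
noncomputable def symTen {d n : ℕ} (q : Ten d n) : Ten d n :=
  fun i => (∑ σ : Equiv.Perm (Fin n), q (i ∘ σ)) / (n.factorial : ℝ)

/-- The pairing `q ξ:η = Σ_{i_1,…,i_{2n}} q_{i_1⋯i_{2n}} ξ_{i_1⋯i_n} η_{i_{n+1}⋯i_{2n}}`
of a tensor of order `2n` with two tensors of order `n`. -/
def quadForm {d n : ℕ} (q : Ten d (n + n)) (ξ η : Ten d n) : ℝ :=
  ∑ j : Fin n → Fin d, ∑ k : Fin n → Fin d, q (Fin.append j k) * ξ j * η k

/-- The `n`-fold tensor power `⊗^n A` of a matrix `A`, a tensor of order `2n`: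
`(⊗^n A)_{i_1⋯i_{2n}} = A_{i_1 i_2} A_{i_3 i_4} ⋯ A_{i_{2n-1} i_{2n}}`. -/
def otimesPow {d : ℕ} (A : Matrix (Fin d) (Fin d) ℝ) (n : ℕ) : Ten d (n + n) :=
  fun i => ∏ k : Fin n,
    A (i ⟨2 * k.1, by have h := k.2; omega⟩) (i ⟨2 * k.1 + 1, by have h := k.2; omega⟩)

open Finset in
/-- Linear transform of a tensor by a matrix applied in every slot. -/
def Psi {d n : ℕ} (B : Matrix (Fin d) (Fin d) ℝ) (ξ : Ten d n) : Ten d n :=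
  fun a => ∑ j : Fin n → Fin d, (∏ l : Fin n, B (a l) (j l)) * ξ j

lemma Psi_comp {d n : ℕ} (C B : Matrix (Fin d) (Fin d) ℝ) (ξ : Ten d n) :
    Psi C (Psi B ξ) = Psi (C * B) ξ := by
  funext a
  unfold Psi
  simp only [Finset.mul_sum]
  rw [Finset.sum_comm]
  refine Finset.sum_congr rfl fun j _ => ?_
  calc ∑ b : Fin n → Fin d, (∏ l : Fin n, C (a l) (b l)) * ((∏ l : Fin n, B (b l) (j l)) * ξ j)
      = (∑ b : Fin n → Fin d, ∏ l : Fin n, C (a l) (b l) * B (b l) (j l)) * ξ j := by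
        rw [Finset.sum_mul]
        refine Finset.sum_congr rfl fun b _ => ?_
        rw [Finset.prod_mul_distrib, mul_assoc]
    _ = (∏ l : Fin n, (C * B) (a l) (j l)) * ξ j := by
        congr 1
        have := (Finset.prod_univ_sum (fun _ : Fin n => (Finset.univ : Finset (Fin d)))
          (fun l y => C (a l) y * B y (j l)))
        rw [Fintype.piFinset_univ] at this
        rw [← this]
        exact Finset.prod_congr rfl fun l _ => (Matrix.mul_apply).symm

lemma Psi_one {d n : ℕ} (ξ : Ten d n) : Psi 1 ξ = ξ := by
  funext a
  unfold Psi
  rw [Fintype.sum_eq_single a]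
  · simp [Matrix.one_apply]
  · intro j hj
    have : ∃ l, j l ≠ a l := by
      by_contra h
      push_neg at h
      exact hj (funext fun l => h l)
    obtain ⟨l, hl⟩ := this
    have : (∏ l : Fin n, (1 : Matrix (Fin d) (Fin d) ℝ) (a l) (j l)) = 0 := by
      apply Finset.prod_eq_zero (Finset.mem_univ l)
      rw [Matrix.one_apply_ne (Ne.symm hl)]
    rw [this, zero_mul]

lemma Psi_symm {d n : ℕ} (B : Matrix (Fin d) (Fin d) ℝ) (ξ : Ten d n)
    (hξ : IsSymTen ξ) : IsSymTen (Psi B ξ) := by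
  intro τ a
  unfold Psi
  have hb : Function.Bijective (fun j : Fin n → Fin d => j ∘ τ.symm) :=
    (Equiv.arrowCongr τ (Equiv.refl (Fin d))).bijective
  refine Fintype.sum_bijective _ hb _ _ fun j => ?_
  rw [hξ τ.symm j]
  congr 1
  simp only [Function.comp_apply]
  rw [← Equiv.prod_comp τ (fun l => B (a l) (j (τ.symm l)))]
  simp

lemma Psi_zero {d n : ℕ} (B : Matrix (Fin d) (Fin d) ℝ) : Psi (n := n) B 0 = 0 := by
  funext a; simp [Psi]

open Finset in
lemma exists_comp_perm {α β : Type*} [Fintype α] [DecidableEq α] [DecidableEq β]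
    (f g : α → β)
    (h : ∀ b, (univ.filter (fun a => f a = b)).card = (univ.filter (fun a => g a = b)).card) :
    ∃ ρ : Equiv.Perm α, f ∘ ρ = g := by
  have hcard : ∀ b, Fintype.card {a // g a = b} = Fintype.card {a // f a = b} := by
    intro b; rw [Fintype.card_subtype, Fintype.card_subtype, h b]
  let e : ∀ b, {a // g a = b} ≃ {a // f a = b} := fun b => Fintype.equivOfCardEq (hcard b)
  refine ⟨(Equiv.sigmaFiberEquiv g).symm.trans ((Equiv.sigmaCongrRight e).trans
    (Equiv.sigmaFiberEquiv f)), ?_⟩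
  funext x
  simp only [Function.comp_apply, Equiv.trans_apply]
  have h1 : (Equiv.sigmaFiberEquiv g).symm x = ⟨g x, ⟨x, rfl⟩⟩ := rfl
  rw [h1]
  have h2 : (Equiv.sigmaCongrRight e) ⟨g x, ⟨x, rfl⟩⟩ = ⟨g x, e (g x) ⟨x, rfl⟩⟩ := rfl
  rw [h2]
  exact (e (g x) ⟨x, rfl⟩).2

open Finset in
lemma sum_split_trip {α γ : Type*} [Fintype α] [DecidableEq α] [Fintype γ] [DecidableEq γ]
    (p q : α → Prop) [DecidablePred p] [DecidablePred q] (X : (α → γ) → ℝ) :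
    ∑ c : α → γ, X c
      = ∑ u : {m // p m} → γ, ∑ s : {m // ¬ p m ∧ q m} → γ, ∑ w : {m // ¬ p m ∧ ¬ q m} → γ,
          X (fun m => if h : p m then u ⟨m, h⟩ else if h' : q m then s ⟨m, h, h'⟩
              else w ⟨m, h, h'⟩) := by
  classical
  let E : (({m // p m} → γ) × ({m // ¬ p m ∧ q m} → γ) × ({m // ¬ p m ∧ ¬ q m} → γ))
      ≃ (α → γ) :=
    { toFun := fun t m => if h : p m then t.1 ⟨m, h⟩ else if h' : q m then t.2.1 ⟨m, h, h'⟩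
        else t.2.2 ⟨m, h, h'⟩
      invFun := fun c => (fun x => c x.1, fun x => c x.1, fun x => c x.1)
      left_inv := by
        rintro ⟨u, s, w⟩
        refine Prod.ext ?_ (Prod.ext ?_ ?_)
        · funext x
          show (if h : p x.1 then u ⟨x.1, h⟩ else _) = u x
          rw [dif_pos x.2]
        · funext x
          show (if h : p x.1 then u ⟨x.1, h⟩ else if h' : q x.1 then s ⟨x.1, h, h'⟩
            else w ⟨x.1, h, h'⟩) = s x
          rw [dif_neg x.2.1, dif_pos x.2.2]
        · funext x
          show (if h : p x.1 then u ⟨x.1, h⟩ else if h' : q x.1 then s ⟨x.1, h, h'⟩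
            else w ⟨x.1, h, h'⟩) = w x
          rw [dif_neg x.2.1, dif_neg x.2.2]
      right_inv := by
        intro c
        funext m
        show (if h : p m then c m else if h' : q m then c m else c m) = c m
        split_ifs <;> rfl }
  rw [← Equiv.sum_comp E X, Fintype.sum_prod_type]
  refine Finset.sum_congr rfl fun u _ => ?_
  rw [Fintype.sum_prod_type]
  rfl

open Finset in
lemma key_nonneg {d n : ℕ} (η : Ten d n) (hη : IsSymTen η) (f g : Fin n → Fin n)
    (cf cg : Fin n → ℕ)
    (hcf : ∀ m, cf m = (univ.filter (fun l => f l = m)).card)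
    (hcg : ∀ m, cg m = (univ.filter (fun l => g l = m)).card)
    (hfg : ∀ m, cf m + cg m = 2) :
    0 ≤ ∑ c : Fin n → Fin d, η (c ∘ f) * η (c ∘ g) := by
  classical
  have hfl : ∀ l, 1 ≤ cf (f l) := fun l => by
    rw [hcf]; exact Finset.card_pos.mpr ⟨l, by simp⟩
  have hgl : ∀ l, 1 ≤ cg (g l) := fun l => by
    rw [hcg]; exact Finset.card_pos.mpr ⟨l, by simp⟩
  have hfl2 : ∀ l, cf (f l) = 1 ∨ cf (f l) = 2 := fun l => by
    have := hfg (f l); have := hfl l; omega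
  have hgne2 : ∀ l, ¬ cf (g l) = 2 := fun l => by
    have := hfg (g l); have := hgl l; omega
  -- cardinality count
  have htotf : ∑ m : Fin n, cf m = n := by
    have h := Finset.card_eq_sum_card_fiberwise (f := f) (s := univ) (t := univ)
      (fun x _ => Finset.mem_univ (f x))
    simp only [card_univ, Fintype.card_fin] at h
    calc ∑ m : Fin n, cf m = ∑ m : Fin n, (univ.filter (fun l => f l = m)).card :=
          Finset.sum_congr rfl (fun m _ => hcf m)
    _ = n := h.symm
  have e1 : ∑ m : Fin n, cf m
      = 2 * (∑ m : Fin n, if cf m = 2 then 1 else 0)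
        + ∑ m : Fin n, if ¬ cf m = 2 ∧ cf m = 1 then 1 else 0 := by
    rw [Finset.mul_sum, ← Finset.sum_add_distrib]
    refine Finset.sum_congr rfl fun m _ => ?_
    have := hfg m
    split_ifs <;> omega
  have e2 : (∑ m : Fin n, if cf m = 2 then 1 else 0)
      + (∑ m : Fin n, if ¬ cf m = 2 ∧ cf m = 1 then 1 else 0)
      + (∑ m : Fin n, if ¬ cf m = 2 ∧ ¬ cf m = 1 then 1 else 0) = n := by
    rw [← Finset.sum_add_distrib, ← Finset.sum_add_distrib]
    have hpt : ∀ m : Fin n, ((if cf m = 2 then 1 else 0)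
        + (if ¬ cf m = 2 ∧ cf m = 1 then 1 else 0)
        + (if ¬ cf m = 2 ∧ ¬ cf m = 1 then 1 else 0)) = 1 := by
      intro m; split_ifs <;> omega
    calc ∑ m : Fin n, ((if cf m = 2 then 1 else 0)
        + (if ¬ cf m = 2 ∧ cf m = 1 then 1 else 0)
        + (if ¬ cf m = 2 ∧ ¬ cf m = 1 then 1 else 0))
        = ∑ _m : Fin n, 1 := Finset.sum_congr rfl fun m _ => hpt m
    _ = n := by simp
  have cardUW : Fintype.card {m : Fin n // cf m = 2}
      = Fintype.card {m : Fin n // ¬ cf m = 2 ∧ ¬ cf m = 1} := by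
    rw [Fintype.card_subtype, Fintype.card_subtype, Finset.card_filter, Finset.card_filter]
    omega
  let β : {m : Fin n // cf m = 2} ≃ {m : Fin n // ¬ cf m = 2 ∧ ¬ cf m = 1} :=
    Fintype.equivOfCardEq cardUW
  let ψf : Fin n → Fin n := fun m =>
    if h : cf m = 2 then (β ⟨m, h⟩).1
    else if h' : ¬ cf m = 2 ∧ ¬ cf m = 1 then (β.symm ⟨m, h'⟩).1 else m
  have hψf2 : ∀ m (h : cf m = 2), ψf m = (β ⟨m, h⟩).1 := fun m h => dif_pos h
  have hψfW : ∀ m (h' : ¬ cf m = 2 ∧ ¬ cf m = 1), ψf m = (β.symm ⟨m, h'⟩).1 := fun m h' => by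
    show dite _ _ _ = _
    rw [dif_neg h'.1, dif_pos h']
  have hψf1 : ∀ m, cf m = 1 → ψf m = m := fun m h1 => by
    show dite _ _ _ = _
    rw [dif_neg (by omega), dif_neg (by tauto)]
  have hψ : Function.Involutive ψf := by
    intro m
    by_cases h : cf m = 2
    · rw [hψf2 m h, hψfW _ (β ⟨m, h⟩).2]
      have he : (⟨(β ⟨m, h⟩).1, (β ⟨m, h⟩).2⟩ :
          {m : Fin n // ¬ cf m = 2 ∧ ¬ cf m = 1}) = β ⟨m, h⟩ := rfl
      rw [he, Equiv.symm_apply_apply]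
    · by_cases h' : ¬ cf m = 2 ∧ ¬ cf m = 1
      · rw [hψfW m h', hψf2 _ (β.symm ⟨m, h'⟩).2]
        have he : (⟨(β.symm ⟨m, h'⟩).1, (β.symm ⟨m, h'⟩).2⟩ :
            {m : Fin n // cf m = 2}) = β.symm ⟨m, h'⟩ := rfl
        rw [he, Equiv.apply_symm_apply]
      · have h1 : cf m = 1 := by have := hfg m; omega
        rw [hψf1 m h1, hψf1 m h1]
  have hcfψ : ∀ m, cg (ψf m) = cf m := by
    intro m
    by_cases h : cf m = 2
    · rw [hψf2 m h]
      have h2 := (β ⟨m, h⟩).2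
      have := hfg (β ⟨m, h⟩).1
      omega
    · by_cases h' : ¬ cf m = 2 ∧ ¬ cf m = 1
      · rw [hψfW m h']
        have h2 := (β.symm ⟨m, h'⟩).2
        have := hfg (β.symm ⟨m, h'⟩).1
        have := hfg m
        omega
      · have h1 : cf m = 1 := by have := hfg m; omega
        rw [hψf1 m h1]
        have := hfg m; omega
  have hfib : ∀ m : Fin n, (univ.filter (fun l => f l = m)).card
      = (univ.filter (fun l => (ψf ∘ g) l = m)).card := by
    intro m
    have hiff : ∀ l, ((ψf ∘ g) l = m) ↔ (g l = ψf m) :=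
      fun l => ⟨fun hh => by rw [← hh]; exact (hψ (g l)).symm,
        fun hh => by show ψf (g l) = m; rw [hh]; exact hψ m⟩
    have hfe : (univ.filter (fun l => (ψf ∘ g) l = m))
        = (univ.filter (fun l => g l = ψf m)) :=
      Finset.filter_congr (fun l _ => hiff l)
    rw [hfe, ← hcg, ← hcf, hcfψ m]
  obtain ⟨ρ, hρ⟩ := exists_comp_perm f (ψf ∘ g) hfib
  -- the three blocks
  let U := {m : Fin n // cf m = 2}
  let S := {m : Fin n // ¬ cf m = 2 ∧ cf m = 1}
  let W := {m : Fin n // ¬ cf m = 2 ∧ ¬ cf m = 1}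
  let Φ1 : (U → Fin d) → (S → Fin d) → ℝ := fun u s =>
    η (fun l => if h : cf (f l) = 2 then u ⟨f l, h⟩
        else s ⟨f l, h, (hfl2 l).resolve_right h⟩)
  let Φ2 : (S → Fin d) → (W → Fin d) → ℝ := fun s w =>
    η (fun l => if h' : cf (g l) = 1 then s ⟨g l, hgne2 l, h'⟩ else w ⟨g l, hgne2 l, h'⟩)
  have hstep1 : ∑ c : Fin n → Fin d, η (c ∘ f) * η (c ∘ g)
      = ∑ u : U → Fin d, ∑ s : S → Fin d, ∑ w : W → Fin d, Φ1 u s * Φ2 s w := by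
    rw [sum_split_trip (fun m => cf m = 2) (fun m => cf m = 1)
      (fun c => η (c ∘ f) * η (c ∘ g))]
    refine Finset.sum_congr rfl fun u _ => Finset.sum_congr rfl fun s _ =>
      Finset.sum_congr rfl fun w _ => ?_
    have hA : η ((fun m => if h : cf m = 2 then u ⟨m, h⟩ else if h' : cf m = 1 then s ⟨m, h, h'⟩
        else w ⟨m, h, h'⟩) ∘ f) = Φ1 u s := by
      unfold Φ1
      refine congrArg η (funext fun l => ?_)
      simp only [Function.comp_apply]
      by_cases h : cf (f l) = 2
      · rw [dif_pos h, dif_pos h]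
      · rw [dif_neg h, dif_neg h, dif_pos ((hfl2 l).resolve_right h)]
    have hB : η ((fun m => if h : cf m = 2 then u ⟨m, h⟩ else if h' : cf m = 1 then s ⟨m, h, h'⟩
        else w ⟨m, h, h'⟩) ∘ g) = Φ2 s w := by
      unfold Φ2
      refine congrArg η (funext fun l => ?_)
      simp only [Function.comp_apply]
      rw [dif_neg (hgne2 l)]
    rw [hA, hB]
  have hcentral : ∀ s : S → Fin d, ∑ u : U → Fin d, Φ1 u s = ∑ w : W → Fin d, Φ2 s w := by
    intro s
    rw [← Equiv.sum_comp (Equiv.arrowCongr β (Equiv.refl (Fin d))) (fun w => Φ2 s w)]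
    refine Finset.sum_congr rfl fun u _ => ?_
    set V1 : Fin n → Fin d := fun m =>
      if h : cf m = 2 then u ⟨m, h⟩
      else if h' : cf m = 1 then s ⟨m, h, h'⟩
      else u (β.symm ⟨m, h, h'⟩) with hV1
    have hT1 : Φ1 u s = η (V1 ∘ f) := by
      unfold Φ1
      refine congrArg η (funext fun l => ?_)
      simp only [Function.comp_apply, hV1]
      by_cases h : cf (f l) = 2
      · rw [dif_pos h, dif_pos h]
      · rw [dif_neg h, dif_neg h, dif_pos ((hfl2 l).resolve_right h)]
    have hT2 : Φ2 s ((Equiv.arrowCongr β (Equiv.refl (Fin d))) u) = η (V1 ∘ ψf ∘ g) := by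
      unfold Φ2
      refine congrArg η (funext fun l => ?_)
      simp only [Function.comp_apply]
      by_cases h' : cf (g l) = 1
      · rw [dif_pos h', hψf1 (g l) h']
        simp only [hV1]
        rw [dif_neg (hgne2 l), dif_pos h']
      · have hW : ¬ cf (g l) = 2 ∧ ¬ cf (g l) = 1 := ⟨hgne2 l, h'⟩
        rw [dif_neg h', hψfW (g l) hW]
        simp only [hV1]
        have h2 := (β.symm ⟨g l, hW⟩).2
        rw [dif_pos h2]
        have he : (⟨(β.symm ⟨g l, hW⟩).1, h2⟩ : U) = β.symm ⟨g l, hW⟩ := rfl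
        rw [he]
        rfl
    have hgψ : V1 ∘ ψf ∘ g = (V1 ∘ f) ∘ ρ := by
      calc V1 ∘ ψf ∘ g = V1 ∘ (f ∘ ρ) := by rw [hρ]
      _ = (V1 ∘ f) ∘ ρ := rfl
    rw [hT1, hT2, hgψ]
    exact (hη ρ (V1 ∘ f)).symm
  rw [hstep1, Finset.sum_comm]
  have hsq : ∀ s : S → Fin d, ∑ u : U → Fin d, ∑ w : W → Fin d, Φ1 u s * Φ2 s w
      = (∑ u : U → Fin d, Φ1 u s) * (∑ u : U → Fin d, Φ1 u s) := by
    intro s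
    rw [← Finset.sum_mul_sum]
    rw [← hcentral s]
  calc (0:ℝ) ≤ ∑ s : S → Fin d, (∑ u : U → Fin d, Φ1 u s) * (∑ u : U → Fin d, Φ1 u s) :=
        Finset.sum_nonneg fun s _ => mul_self_nonneg _
  _ = ∑ s : S → Fin d, ∑ u : U → Fin d, ∑ w : W → Fin d, Φ1 u s * Φ2 s w :=
        Finset.sum_congr rfl fun s _ => (hsq s).symm

def pairOf {n : ℕ} (t : Fin (n + n)) : Fin n := ⟨t.1 / 2, by have := t.2; omega⟩

def pairHalf {n : ℕ} (σ : Equiv.Perm (Fin (n + n))) (s : Fin (n + n)) : Fin n :=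
  pairOf (σ.symm s)

def pairEquiv {n : ℕ} : (Fin n × Fin 2) ≃ Fin (n + n) where
  toFun p := ⟨2 * p.1.1 + p.2.1, by have := p.1.2; have := p.2.2; omega⟩
  invFun t := (pairOf t, ⟨t.1 % 2, by omega⟩)
  left_inv p := by
    refine Prod.ext (Fin.ext ?_) (Fin.ext ?_)
    · show (2 * p.1.1 + p.2.1) / 2 = p.1.1
      have := p.2.2; omega
    · show (2 * p.1.1 + p.2.1) % 2 = p.2.1
      have := p.2.2; omega
  right_inv t := by
    apply Fin.ext
    show 2 * (t.1 / 2) + t.1 % 2 = t.1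
    omega

open Finset in
lemma otimes_expand {d n : ℕ} (B : Matrix (Fin d) (Fin d) ℝ) (hB : ∀ x y, B x y = B y x)
    (σ : Equiv.Perm (Fin (n + n))) (i : Fin (n + n) → Fin d) :
    otimesPow (B * B) n (i ∘ σ)
      = ∑ c : Fin n → Fin d,
          (∏ l : Fin n, B (c (pairHalf σ (Fin.castAdd n l))) (i (Fin.castAdd n l)))
          * (∏ l : Fin n, B (c (pairHalf σ (Fin.natAdd n l))) (i (Fin.natAdd n l))) := by
  have h1 : ∀ (x y : Fin d), (B * B) x y = ∑ a : Fin d, B a x * B a y := by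
    intro x y; rw [Matrix.mul_apply]
    exact Finset.sum_congr rfl fun a _ => by rw [hB x a]
  unfold otimesPow
  simp only [h1, Function.comp_apply]
  rw [Finset.prod_univ_sum, Fintype.piFinset_univ]
  refine Finset.sum_congr rfl fun c _ => ?_
  rw [← Fin.prod_univ_add (fun s => B (c (pairHalf σ s)) (i s)),
    ← Equiv.prod_comp σ (fun s => B (c (pairHalf σ s)) (i s))]
  have hph : ∀ t, pairHalf σ (σ t) = pairOf t := by
    intro t; unfold pairHalf; rw [Equiv.symm_apply_apply]
  simp only [hph]
  rw [← Equiv.prod_comp pairEquiv (fun t => B (c (pairOf t)) (i (σ t))),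
    Fintype.prod_prod_type]
  refine Finset.prod_congr rfl fun k _ => ?_
  rw [Fin.prod_univ_two]
  have e0 : pairEquiv ((k, 0) : Fin n × Fin 2)
      = (⟨2 * k.1, by have := k.2; omega⟩ : Fin (n + n)) := by
    apply Fin.ext; show 2 * k.1 + (0 : Fin 2).1 = 2 * k.1; simp
  have e1 : pairEquiv ((k, 1) : Fin n × Fin 2)
      = (⟨2 * k.1 + 1, by have := k.2; omega⟩ : Fin (n + n)) := by
    apply Fin.ext; show 2 * k.1 + (1 : Fin 2).1 = 2 * k.1 + 1; simp
  have p0 : pairOf (⟨2 * k.1, by have := k.2; omega⟩ : Fin (n + n)) = k := by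
    apply Fin.ext; show 2 * k.1 / 2 = k.1; omega
  have p1 : pairOf (⟨2 * k.1 + 1, by have := k.2; omega⟩ : Fin (n + n)) = k := by
    apply Fin.ext; show (2 * k.1 + 1) / 2 = k.1; omega
  rw [e0, e1, p0, p1]

open Finset in
lemma T_eq {d n : ℕ} (B : Matrix (Fin d) (Fin d) ℝ) (hB : ∀ x y, B x y = B y x)
    (ξ : Ten d n) (σ : Equiv.Perm (Fin (n + n))) :
    ∑ j : Fin n → Fin d, ∑ k : Fin n → Fin d,
        otimesPow (B * B) n (Fin.append j k ∘ σ) * ξ j * ξ k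
      = ∑ c : Fin n → Fin d,
          (Psi B ξ) (c ∘ (fun l => pairHalf σ (Fin.castAdd n l)))
          * (Psi B ξ) (c ∘ (fun l => pairHalf σ (Fin.natAdd n l))) := by
  have hkey : ∀ j k : Fin n → Fin d, otimesPow (B * B) n (Fin.append j k ∘ σ)
      = ∑ c : Fin n → Fin d,
          (∏ l : Fin n, B (c (pairHalf σ (Fin.castAdd n l))) (j l))
          * (∏ l : Fin n, B (c (pairHalf σ (Fin.natAdd n l))) (k l)) := by
    intro j k
    rw [otimes_expand B hB σ (Fin.append j k)]
    refine Finset.sum_congr rfl fun c _ => ?_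
    congr 1
    · refine Finset.prod_congr rfl fun l _ => ?_
      rw [Fin.append_left]
    · refine Finset.prod_congr rfl fun l _ => ?_
      rw [Fin.append_right]
  simp only [hkey]
  simp only [Finset.sum_mul]
  have hrhs : ∀ c : Fin n → Fin d,
      (Psi B ξ) (c ∘ fun l => pairHalf σ (Fin.castAdd n l))
        * (Psi B ξ) (c ∘ fun l => pairHalf σ (Fin.natAdd n l))
      = ∑ j : Fin n → Fin d, ∑ k : Fin n → Fin d,
          ((∏ l : Fin n, B (c (pairHalf σ (Fin.castAdd n l))) (j l))
            * (∏ l : Fin n, B (c (pairHalf σ (Fin.natAdd n l))) (k l))) * ξ j * ξ k := by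
    intro c
    unfold Psi
    rw [Finset.sum_mul_sum]
    refine Finset.sum_congr rfl fun j _ => Finset.sum_congr rfl fun k _ => ?_
    simp only [Function.comp_apply]
    ring
  simp only [hrhs]
  conv_lhs => enter [2, j]; rw [Finset.sum_comm]
  rw [Finset.sum_comm]

open Finset in
lemma fiber_card_two {n : ℕ} (σ : Equiv.Perm (Fin (n + n))) (m : Fin n) :
    (univ.filter (fun l : Fin n => pairHalf σ (Fin.castAdd n l) = m)).card
      + (univ.filter (fun l : Fin n => pairHalf σ (Fin.natAdd n l) = m)).card = 2 := by
  classical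
  have hsplit : (univ.filter (fun s : Fin (n + n) => pairHalf σ s = m)).card
      = (univ.filter (fun l : Fin n => pairHalf σ (Fin.castAdd n l) = m)).card
        + (univ.filter (fun l : Fin n => pairHalf σ (Fin.natAdd n l) = m)).card := by
    rw [Finset.card_filter, Finset.card_filter, Finset.card_filter, Fin.sum_univ_add]
  have hre : (univ.filter (fun s : Fin (n + n) => pairHalf σ s = m)).card
      = (univ.filter (fun t : Fin (n + n) => pairOf t = m)).card := by
    rw [Finset.card_filter, Finset.card_filter]
    exact Equiv.sum_comp σ.symm (fun t => if pairOf t = m then 1 else 0)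
  have hset : (univ.filter (fun t : Fin (n + n) => pairOf t = m))
      = {(⟨2 * m.1, by have := m.2; omega⟩ : Fin (n + n)),
          ⟨2 * m.1 + 1, by have := m.2; omega⟩} := by
    ext t
    simp only [Finset.mem_filter, Finset.mem_univ, true_and, Finset.mem_insert,
      Finset.mem_singleton, Fin.ext_iff]
    show t.1 / 2 = m.1 ↔ _
    omega
  rw [← hsplit, hre, hset]
  rw [Finset.card_insert_of_notMem (by simp [Fin.ext_iff]), Finset.card_singleton]

def tau0 (n : ℕ) : Equiv.Perm (Fin (n + n)) where
  toFun t := ⟨if t.1 < n then 2 * t.1 else 2 * (t.1 - n) + 1, by have := t.2; split_ifs <;> omega⟩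
  invFun s := ⟨if s.1 % 2 = 0 then s.1 / 2 else n + s.1 / 2, by have := s.2; split_ifs <;> omega⟩
  left_inv t := by
    apply Fin.ext
    have := t.2
    dsimp only
    split_ifs <;> omega
  right_inv s := by
    apply Fin.ext
    have := s.2
    dsimp only
    split_ifs <;> omega

lemma tau0_cast {n : ℕ} (l : Fin n) :
    pairHalf (tau0 n).symm (Fin.castAdd n l) = l := by
  apply Fin.ext
  have hv : ((tau0 n) (Fin.castAdd n l)).1 = 2 * l.1 := by
    show (if (Fin.castAdd n l).1 < n then 2 * (Fin.castAdd n l).1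
      else 2 * ((Fin.castAdd n l).1 - n) + 1) = 2 * l.1
    rw [Fin.coe_castAdd, if_pos l.2]
  show ((tau0 n).symm.symm (Fin.castAdd n l)).1 / 2 = l.1
  rw [Equiv.symm_symm, hv]
  omega

lemma tau0_nat {n : ℕ} (l : Fin n) :
    pairHalf (tau0 n).symm (Fin.natAdd n l) = l := by
  apply Fin.ext
  have hv : ((tau0 n) (Fin.natAdd n l)).1 = 2 * l.1 + 1 := by
    show (if (Fin.natAdd n l).1 < n then 2 * (Fin.natAdd n l).1
      else 2 * ((Fin.natAdd n l).1 - n) + 1) = 2 * l.1 + 1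
    rw [Fin.coe_natAdd, if_neg (by omega)]
    omega
  show ((tau0 n).symm.symm (Fin.natAdd n l)).1 / 2 = l.1
  rw [Equiv.symm_symm, hv]
  omega

/-- Lemma 5.4.2: if `A` is a symmetric positive definite `d×d` real matrix,
then the symmetrized `n`-fold tensor power `S^{2n}(⊗^n A)` is a positive definite tensor:
for every nonzero symmetric tensor `ξ` of order `n`, `S^{2n}(⊗^n A) ξ:ξ > 0`. -/
theorem stmt0 (d n : ℕ) (hd : 1 ≤ d) (hn : 1 ≤ n)
    (A : Matrix (Fin d) (Fin d) ℝ) (hAsym : A.IsSymm) (hApd : A.PosDef) :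
    ∀ ξ : Ten d n, IsSymTen ξ → ξ ≠ 0 → 0 < quadForm (symTen (otimesPow A n)) ξ ξ := by
  
  intro ξ hξ hξ0
  have hB := hApd.posSemidef
  set B := (open scoped MatrixOrder in CFC.sqrt A) with hBdef
  have hBB : B * B = A := by open scoped MatrixOrder in exact CFC.sqrt_mul_sqrt_self A hB.nonneg
  have hBsym : ∀ x y, B x y = B y x := by
    intro x y
    have h : B.IsHermitian := (open scoped MatrixOrder in Matrix.nonneg_iff_posSemidef.mp (CFC.sqrt_nonneg A)).1
    simpa using (h.apply x y).symm
  have hdet : B.det ≠ 0 := by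
    intro h0
    have hA0 : A.det = 0 := by rw [← hBB, Matrix.det_mul, h0, mul_zero]
    exact absurd hA0 (ne_of_gt hApd.det_pos)
  set η := Psi B ξ with hηdef
  have hηs : IsSymTen η := Psi_symm B ξ hξ
  have hηne : η ≠ 0 := by
    intro h
    apply hξ0
    have h2 : Psi B⁻¹ η = ξ := by
      rw [hηdef, Psi_comp, Matrix.nonsing_inv_mul B (isUnit_iff_ne_zero.mpr hdet), Psi_one]
    rw [← h2, h, Psi_zero]
  have hmain : quadForm (symTen (otimesPow A n)) ξ ξ
      = (∑ σ : Equiv.Perm (Fin (n + n)), ∑ j : Fin n → Fin d, ∑ k : Fin n → Fin d,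
          otimesPow A n (Fin.append j k ∘ σ) * ξ j * ξ k) / ((n + n).factorial : ℝ) := by
    unfold quadForm symTen
    simp only [div_mul_eq_mul_div, Finset.sum_mul, ← Finset.sum_div]
    congr 1
    conv_lhs => enter [2, j]; rw [Finset.sum_comm]
    rw [Finset.sum_comm]
  rw [hmain]
  have hfac : (0 : ℝ) < ((n + n).factorial : ℝ) := by
    exact_mod_cast Nat.factorial_pos _
  apply div_pos ?_ hfac
  apply Finset.sum_pos'
  · intro σ _
    have hT := T_eq B hBsym ξ σ
    rw [hBB] at hT
    rw [hT]
    exact key_nonneg η hηs (fun l => pairHalf σ (Fin.castAdd n l))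
      (fun l => pairHalf σ (Fin.natAdd n l))
      (fun m => (Finset.univ.filter (fun l => pairHalf σ (Fin.castAdd n l) = m)).card)
      (fun m => (Finset.univ.filter (fun l => pairHalf σ (Fin.natAdd n l) = m)).card)
      (fun m => rfl) (fun m => rfl) (fiber_card_two σ)
  · refine ⟨(tau0 n).symm, Finset.mem_univ _, ?_⟩
    have hT := T_eq B hBsym ξ (tau0 n).symm
    rw [hBB] at hT
    rw [hT]
    have hf : (fun l : Fin n => pairHalf (tau0 n).symm (Fin.castAdd n l)) = id :=
      funext tau0_cast
    have hg : (fun l : Fin n => pairHalf (tau0 n).symm (Fin.natAdd n l)) = id :=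
      funext tau0_nat
    rw [hf, hg]
    simp only [Function.comp_id]
    obtain ⟨c0, hc0⟩ := Function.ne_iff.mp hηne
    refine Finset.sum_pos' (fun c _ => mul_self_nonneg _) ⟨c0, Finset.mem_univ _, ?_⟩
    have hne : η c0 ≠ 0 := by simpa using hc0
    exact mul_self_pos.mpr hne
end

section
/- Let d ≥ 1, n ≥ 1, let R ∈ Ten^{2n}(ℝ^d) be a positive definite tensor, and let A be a symmetric positive definite d×d real matrix. Then the tensor T ∈ Ten^{2n+2}(ℝ^d) defined by T_{i_1 i_2 ⋯ i_{2n+1} i_{2n+2}} = A_{i_1 i_{2n+2}} R_{i_2 ⋯ i_{2n+1}} is positive definite: for every nonzero ξ ∈ Sym^{n+1}(ℝ^d), Σ_{i_1,…,i_{2n+2}=1}^d A_{i_1 i_{2n+2}} R_{i_2⋯i_{2n+1}} ξ_{i_1⋯i_{n+1}} ξ_{i_{n+2}⋯i_{2n+2}} > 0. -/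
private lemma sum_comm4 {α β γ δ M : Type*} [Fintype α] [Fintype β] [Fintype γ] [Fintype δ]
    [AddCommMonoid M] (f : α → β → γ → δ → M) :
    ∑ a, ∑ b, ∑ c, ∑ e, f a b c e = ∑ c, ∑ e, ∑ a, ∑ b, f a b c e := by
  calc ∑ a, ∑ b, ∑ c, ∑ e, f a b c e
      = ∑ a, ∑ c, ∑ b, ∑ e, f a b c e :=
        Finset.sum_congr rfl fun a _ => Finset.sum_comm
    _ = ∑ c, ∑ a, ∑ b, ∑ e, f a b c e := Finset.sum_comm
    _ = ∑ c, ∑ a, ∑ e, ∑ b, f a b c e :=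
        Finset.sum_congr rfl fun c _ => Finset.sum_congr rfl fun a _ => Finset.sum_comm
    _ = ∑ c, ∑ e, ∑ a, ∑ b, f a b c e :=
        Finset.sum_congr rfl fun c _ => Finset.sum_comm

private lemma append_mid (d n : ℕ) (j k : Fin (n+1) → Fin d) :
    (fun a : Fin (n+n) => Fin.append j k ⟨a.1 + 1, by have h := a.2; omega⟩)
      = Fin.append (Fin.tail j) (Fin.init k) := by
  funext a
  induction a using Fin.addCases with
  | left a =>
    rw [Fin.append_left]
    have h1 : (⟨(Fin.castAdd n a).1 + 1, by have := a.2; omega⟩ : Fin ((n+1)+(n+1)))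
        = Fin.castAdd (n+1) a.succ := rfl
    rw [h1, Fin.append_left]
    rfl
  | right a =>
    rw [Fin.append_right]
    have h1 : (⟨(Fin.natAdd n a).1 + 1, by have := a.2; omega⟩ : Fin ((n+1)+(n+1)))
        = Fin.natAdd (n+1) a.castSucc := by
      apply Fin.ext; simp; omega
    rw [h1, Fin.append_right]
    rfl

private lemma append_zero (d n : ℕ) (j k : Fin (n+1) → Fin d) :
    Fin.append j k ⟨0, by omega⟩ = j 0 :=
  Fin.append_left j k 0

private lemma append_last (d n : ℕ) (j k : Fin (n+1) → Fin d) :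
    Fin.append j k ⟨2*n+1, by omega⟩ = k (Fin.last n) := by
  have h : (⟨2*n+1, by omega⟩ : Fin ((n+1)+(n+1))) = Fin.natAdd (n+1) (Fin.last n) := by
    apply Fin.ext; simp [Fin.natAdd]; omega
  rw [h, Fin.append_right]

/-- Lemma 5.3: if `R ∈ Ten^{2n}(ℝ^d)` is positive definite and `A` is a
symmetric positive definite `d×d` matrix, then the tensor
`T_{i_1 i_2 ⋯ i_{2n+1} i_{2n+2}} = A_{i_1 i_{2n+2}} R_{i_2⋯i_{2n+1}}` of order `2n+2`
is positive definite: `T ξ:ξ > 0` for every nonzero symmetric `ξ` of order `n+1`. -/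
theorem stmt1 (d n : ℕ) (hd : 1 ≤ d) (hn : 1 ≤ n)
    (R : Ten d (n + n))
    (hR : ∀ ξ : Ten d n, IsSymTen ξ → ξ ≠ 0 → 0 < quadForm R ξ ξ)
    (A : Matrix (Fin d) (Fin d) ℝ) (hAsym : A.IsSymm) (hApd : A.PosDef) :
    ∀ ξ : Ten d (n + 1), IsSymTen ξ → ξ ≠ 0 →
      0 < quadForm
        (fun i : Fin ((n + 1) + (n + 1)) → Fin d =>
          A (i ⟨0, by omega⟩) (i ⟨2 * n + 1, by omega⟩) *
            R (fun a => i ⟨a.1 + 1, by have h := a.2; omega⟩))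
        ξ ξ := by
  intro ξ hξ hξ0
  classical
  set η : Fin d → Ten d n := fun a j => ξ (Fin.cons a j) with hηdef
  have hηsym : ∀ a : Fin d, IsSymTen (η a) := by
    intro a σ j
    have hcomp : Fin.cons a (j ∘ σ)
        = (Fin.cons a j : Fin (n+1) → Fin d) ∘ (Equiv.Perm.decomposeFin.symm (0, σ)) := by
      funext i
      induction i using Fin.cases with
      | zero => simp
      | succ m => simp [Equiv.Perm.decomposeFin_symm_apply_succ]
    show ξ (Fin.cons a (j ∘ σ)) = ξ (Fin.cons a j)
    rw [hcomp, hξ]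
  have hsnoc : ∀ (k' : Fin n → Fin d) (b : Fin d), ξ (Fin.snoc k' b) = η b k' := by
    intro k' b
    have h : (Fin.snoc k' b : Fin (n+1) → Fin d)
        = (Fin.cons b k') ∘ (finRotate (n+1)) := by
      funext i
      induction i using Fin.lastCases with
      | last => simp [finRotate_last]
      | cast m => simp [finRotate_succ_apply, Fin.coeSucc_eq_succ]
    rw [h, hξ]
  -- decompose A
  obtain ⟨B, hB⟩ : ∃ B : Matrix (Fin d) (Fin d) ℝ, A = Matrix.conjTranspose B * B := by
    open scoped MatrixOrder in
    obtain ⟨B, hB⟩ := CStarAlgebra.nonneg_iff_eq_star_mul_self.mp hApd.posSemidef.nonneg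
    exact ⟨B, hB⟩
  have hAentry : ∀ a b : Fin d, A a b = ∑ m : Fin d, B m a * B m b := by
    intro a b
    rw [hB]
    simp [Matrix.mul_apply, Matrix.conjTranspose_apply]
  have hBunit : IsUnit B := by
    rw [Matrix.isUnit_iff_isUnit_det, isUnit_iff_ne_zero]
    intro h0
    have : A.det = 0 := by rw [hB, Matrix.det_mul, h0, mul_zero]
    exact (hApd.det_pos.ne' this)
  have hBinj : Function.Injective B.mulVec :=
    Matrix.mulVec_injective_iff_isUnit.mpr hBunit
  set ζ : Fin d → Ten d n := fun m j => ∑ a, B m a * η a j with hζdef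
  have hζsym : ∀ m : Fin d, IsSymTen (ζ m) := by
    intro m σ j
    show (∑ a, B m a * η a (j ∘ σ)) = ∑ a, B m a * η a j
    exact Finset.sum_congr rfl fun a _ => by rw [hηsym a σ j]
  -- Step 1 : rewrite the quadratic form
  have key1 : quadForm
        (fun i : Fin ((n + 1) + (n + 1)) → Fin d =>
          A (i ⟨0, by omega⟩) (i ⟨2 * n + 1, by omega⟩) *
            R (fun a => i ⟨a.1 + 1, by have h := a.2; omega⟩))
        ξ ξ
      = ∑ a : Fin d, ∑ b : Fin d, A a b * quadForm R (η a) (η b) := by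
    unfold quadForm
    calc
      ∑ j : Fin (n+1) → Fin d, ∑ k : Fin (n+1) → Fin d,
          (A (Fin.append j k ⟨0, by omega⟩) (Fin.append j k ⟨2*n+1, by omega⟩) *
            R (fun a => Fin.append j k ⟨a.1 + 1, by have h := a.2; omega⟩)) * ξ j * ξ k
        = ∑ j : Fin (n+1) → Fin d, ∑ k : Fin (n+1) → Fin d,
            A (j 0) (k (Fin.last n)) * R (Fin.append (Fin.tail j) (Fin.init k)) * ξ j * ξ k := by
          refine Finset.sum_congr rfl fun j _ => Finset.sum_congr rfl fun k _ => ?_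
          rw [append_zero, append_last, append_mid]
      _ = ∑ p : Fin d × (Fin n → Fin d), ∑ q : Fin d × (Fin n → Fin d),
            A (p.1) (q.1) * R (Fin.append p.2 q.2) * η p.1 p.2 * η q.1 q.2 := by
          rw [← Equiv.sum_comp (Fin.consEquiv (fun _ => Fin d))]
          refine Finset.sum_congr rfl fun p _ => ?_
          rw [← Equiv.sum_comp (Fin.snocEquiv (fun _ => Fin d))]
          refine Finset.sum_congr rfl fun q _ => ?_
          have e1 : (Fin.consEquiv fun _ => Fin d) p = Fin.cons p.1 p.2 := rfl
          have e2 : (Fin.snocEquiv fun _ => Fin d) q = Fin.snoc q.2 q.1 := rfl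
          rw [e1, e2, Fin.cons_zero, Fin.snoc_last, Fin.tail_cons, Fin.init_snoc, hsnoc]
      _ = ∑ a : Fin d, ∑ j' : Fin n → Fin d, ∑ b : Fin d, ∑ k' : Fin n → Fin d,
            A a b * R (Fin.append j' k') * η a j' * η b k' := by
          rw [Fintype.sum_prod_type]
          refine Finset.sum_congr rfl fun a _ => Finset.sum_congr rfl fun j' _ => ?_
          rw [Fintype.sum_prod_type]
      _ = ∑ a : Fin d, ∑ b : Fin d, ∑ j' : Fin n → Fin d, ∑ k' : Fin n → Fin d,
            A a b * R (Fin.append j' k') * η a j' * η b k' := by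
          exact Finset.sum_congr rfl fun a _ => Finset.sum_comm
      _ = ∑ a : Fin d, ∑ b : Fin d, A a b * quadForm R (η a) (η b) := by
          refine Finset.sum_congr rfl fun a _ => Finset.sum_congr rfl fun b _ => ?_
          unfold quadForm
          rw [Finset.mul_sum]
          refine Finset.sum_congr rfl fun j' _ => ?_
          rw [Finset.mul_sum]
          exact Finset.sum_congr rfl fun k' _ => by ring
  -- Step 2 : diagonalize
  have key2 : ∑ a : Fin d, ∑ b : Fin d, A a b * quadForm R (η a) (η b)
      = ∑ m : Fin d, quadForm R (ζ m) (ζ m) := by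
    have expand : ∀ m : Fin d, quadForm R (ζ m) (ζ m)
        = ∑ a : Fin d, ∑ b : Fin d, (B m a * B m b) * quadForm R (η a) (η b) := by
      intro m
      unfold quadForm
      calc
        ∑ j : Fin n → Fin d, ∑ k : Fin n → Fin d,
            R (Fin.append j k) * ζ m j * ζ m k
          = ∑ j : Fin n → Fin d, ∑ k : Fin n → Fin d, ∑ a : Fin d, ∑ b : Fin d,
              (B m a * B m b) * (R (Fin.append j k) * η a j * η b k) := by
            refine Finset.sum_congr rfl fun j _ => Finset.sum_congr rfl fun k _ => ?_
            show R (Fin.append j k) * (∑ a, B m a * η a j) * (∑ b, B m b * η b k) = _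
            rw [mul_assoc, Finset.sum_mul_sum, Finset.mul_sum]
            refine Finset.sum_congr rfl fun a _ => ?_
            rw [Finset.mul_sum]
            exact Finset.sum_congr rfl fun b _ => by ring
          _ = ∑ a : Fin d, ∑ b : Fin d, ∑ j : Fin n → Fin d, ∑ k : Fin n → Fin d,
              (B m a * B m b) * (R (Fin.append j k) * η a j * η b k) :=
            sum_comm4 _
          _ = ∑ a : Fin d, ∑ b : Fin d, (B m a * B m b) *
              ∑ j : Fin n → Fin d, ∑ k : Fin n → Fin d,
                R (Fin.append j k) * η a j * η b k := by
            refine Finset.sum_congr rfl fun a _ => Finset.sum_congr rfl fun b _ => ?_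
            rw [Finset.mul_sum]
            exact Finset.sum_congr rfl fun j _ => (Finset.mul_sum _ _ _).symm
    calc
      ∑ a : Fin d, ∑ b : Fin d, A a b * quadForm R (η a) (η b)
        = ∑ a : Fin d, ∑ b : Fin d, ∑ m : Fin d,
            (B m a * B m b) * quadForm R (η a) (η b) := by
          refine Finset.sum_congr rfl fun a _ => Finset.sum_congr rfl fun b _ => ?_
          rw [hAentry, Finset.sum_mul]
      _ = ∑ a : Fin d, ∑ m : Fin d, ∑ b : Fin d,
            (B m a * B m b) * quadForm R (η a) (η b) :=
          Finset.sum_congr rfl fun a _ => Finset.sum_comm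
      _ = ∑ m : Fin d, ∑ a : Fin d, ∑ b : Fin d,
            (B m a * B m b) * quadForm R (η a) (η b) := Finset.sum_comm
      _ = ∑ m : Fin d, quadForm R (ζ m) (ζ m) :=
          Finset.sum_congr rfl fun m _ => (expand m).symm
  rw [key1, key2]
  -- positivity
  have hnonneg : ∀ m ∈ Finset.univ (α := Fin d), 0 ≤ quadForm R (ζ m) (ζ m) := by
    intro m _
    rcases eq_or_ne (ζ m) 0 with h | h
    · rw [h]
      simp [quadForm]
    · exact le_of_lt (hR (ζ m) (hζsym m) h)
  -- some ζ m is nonzero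
  have hex : ∃ m : Fin d, ζ m ≠ 0 := by
    by_contra hall
    push_neg at hall
    have hη0 : ∀ a : Fin d, η a = 0 := by
      intro a
      funext j
      have hv : B.mulVec (fun c => η c j) = B.mulVec 0 := by
        funext m
        have h1 : B.mulVec (fun c => η c j) m = ζ m j := by
          simp [Matrix.mulVec, dotProduct, hζdef]
        rw [h1, hall m]
        simp [Matrix.mulVec_zero]
      have := hBinj hv
      have h2 : (fun c => η c j) a = (0 : Fin d → ℝ) a := by rw [this]
      simpa using h2
    apply hξ0
    funext i
    have h3 : ξ i = η (i 0) (Fin.tail i) := by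
      rw [hηdef]
      simp only
      rw [Fin.cons_self_tail]
    rw [h3, hη0]
    rfl
  obtain ⟨m0, hm0⟩ := hex
  exact Finset.sum_pos' hnonneg ⟨m0, Finset.mem_univ m0, hR (ζ m0) (hζsym m0) hm0⟩
end

section
/- Let d ≥ 1, s ≥ 1, and let a^0 ∈ Ten^2(ℝ^d), a^{2r} ∈ Ten^{2r+2}(ℝ^d), and b^{2r} ∈ Ten^{2r}(ℝ^d) for 1 ≤ r ≤ s be given tensors. Define the tensors B^r(j) by B^r(0) = −b^{2r} for 1 ≤ r ≤ s, and B^r(j) = −Σ_{m=1}^{r−j} b^{2m} ⊗ B^{r−m}(j−1) for 1 ≤ j ≤ s−1 and j+1 ≤ r ≤ s. Define c^0 = a^0 and inductively c^r = a^{2r} − Σ_{ℓ=0}^{r−1} c^ℓ ⊗ b^{2(r−ℓ)} for 1 ≤ r ≤ s, and define c̃^0 = a^0 and c̃^r = a^{2r} + Σ_{j=1}^{r} Σ_{m=0}^{r−j} a^{2m} ⊗ B^{r−m}(j−1) for 1 ≤ r ≤ s (with the convention a^0 = c^0). Then for every 0 ≤ r ≤ s one has c̃^r =_S c^r, i.e.,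 S^{2r+2}(c̃^r) = S^{2r+2}(c^r). -/
/-- Tensor product: `(p ⊗ q)_{i_1⋯i_{m+n}} = p_{i_1⋯i_m} q_{i_{m+1}⋯i_{m+n}}`. -/
def tmul {d m n : ℕ} (p : Ten d m) (q : Ten d n) : Ten d (m + n) :=
  fun i => p (fun a => i (Fin.castAdd n a)) * q (fun a => i (Fin.natAdd m a))

/-- Reinterpret a tensor of order `m` as a tensor of order `n` along a proof `m = n`. -/
def castTen {d m n : ℕ} (h : m = n) (p : Ten d m) : Ten d n :=
  fun i => p (fun a => i (Fin.cast h a))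

abbrev UU (d : ℕ) := (ℕ → Fin d) → ℝ

def Emb (d n : ℕ) (p : Ten d n) : UU d := fun i => p (fun a => i a.1)

def pmul (d m : ℕ) (P Q : UU d) : UU d := fun i => P i * Q (fun k => i (m + k))

lemma Emb_castTen {d m n : ℕ} (h : m = n) (p : Ten d m) :
    Emb d n (castTen h p) = Emb d m p := rfl

lemma Emb_tmul {d m n : ℕ} (p : Ten d m) (q : Ten d n) :
    Emb d (m + n) (tmul p q) = pmul d m (Emb d m p) (Emb d n q) := rfl

lemma Emb_neg {d n : ℕ} (p : Ten d n) : Emb d n (-p) = -Emb d n p := rfl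
lemma Emb_add {d n : ℕ} (p q : Ten d n) : Emb d n (p + q) = Emb d n p + Emb d n q := rfl
lemma Emb_sub {d n : ℕ} (p q : Ten d n) : Emb d n (p - q) = Emb d n p - Emb d n q := rfl

lemma Emb_sum {d n : ℕ} {ι : Type*} (F : Finset ι) (f : ι → Ten d n) :
    Emb d n (∑ t ∈ F, f t) = ∑ t ∈ F, Emb d n (f t) := by
  funext i; simp [Emb, Finset.sum_apply]

lemma Emb_inj {d n : ℕ} (hd : 1 ≤ d) : Function.Injective (Emb d n) := by
  intro p q h
  funext j
  have := congrFun h (fun k => if hk : k < n then j ⟨k, hk⟩ else ⟨0, hd⟩)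
  simpa [Emb] using this

lemma pmul_assoc (d m n : ℕ) (P Q R : UU d) :
    pmul d m P (pmul d n Q R) = pmul d (m + n) (pmul d m P Q) R := by
  funext i; simp [pmul, mul_assoc, add_assoc]

lemma pmul_neg_left (d m : ℕ) (P Q : UU d) : pmul d m (-P) Q = -pmul d m P Q := by
  funext i; simp [pmul]
lemma pmul_neg_right (d m : ℕ) (P Q : UU d) : pmul d m P (-Q) = -pmul d m P Q := by
  funext i; simp [pmul]
lemma pmul_sub_left (d m : ℕ) (P P' Q : UU d) :
    pmul d m (P - P') Q = pmul d m P Q - pmul d m P' Q := by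
  funext i; simp [pmul, sub_mul]
lemma pmul_sum_left (d m : ℕ) {ι : Type*} (F : Finset ι) (f : ι → UU d) (Q : UU d) :
    pmul d m (∑ t ∈ F, f t) Q = ∑ t ∈ F, pmul d m (f t) Q := by
  funext i; simp [pmul, Finset.sum_apply, Finset.sum_mul]
lemma pmul_sum_right (d m : ℕ) {ι : Type*} (F : Finset ι) (P : UU d) (f : ι → UU d) :
    pmul d m P (∑ t ∈ F, f t) = ∑ t ∈ F, pmul d m P (f t) := by
  funext i; simp [pmul, Finset.sum_apply, Finset.mul_sum]

lemma tri {M : Type*} [AddCommMonoid M] (N : ℕ) (f : ℕ → ℕ → M) :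
    ∑ t ∈ Finset.range N, ∑ u ∈ Finset.range (N - t), f t u
    = ∑ u ∈ Finset.range N, ∑ t ∈ Finset.range (N - u), f t u := by
  have key : ∀ g : ℕ → ℕ → M,
      (∑ t ∈ Finset.range N, ∑ u ∈ Finset.range (N - t), g t u)
      = ∑ t ∈ Finset.range N, ∑ u ∈ Finset.range N, if t + u < N then g t u else 0 := by
    intro g
    refine Finset.sum_congr rfl fun t ht => ?_
    rw [← Finset.sum_filter]
    apply Finset.sum_congr _ (fun _ _ => rfl)
    ext u; simp; omega
  rw [key, key, Finset.sum_comm]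
  refine Finset.sum_congr rfl fun t _ => Finset.sum_congr rfl fun u _ => ?_
  simp [Nat.add_comm]
lemma Brev (d s : ℕ) (Eb : ℕ → UU d) (EB : ℕ → ℕ → UU d)
    (hB0 : ∀ m, 1 ≤ m → m ≤ s → EB m 0 = -(Eb m))
    (hBj : ∀ j m, 1 ≤ j → j ≤ s - 1 → j + 1 ≤ m → m ≤ s →
      EB m j = -(∑ t ∈ Finset.range (m - j),
        pmul d (2 * (t + 1)) (Eb (t + 1)) (EB (m - (t + 1)) (j - 1)))) :
    ∀ j, 1 ≤ j → ∀ m, j + 1 ≤ m → m ≤ s →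
      EB m j = -(∑ u ∈ Finset.range (m - j),
        pmul d (2 * (m - (u + 1))) (EB (m - (u + 1)) (j - 1)) (Eb (u + 1))) := by
  intro j
  induction j with
  | zero => omega
  | succ j ih =>
    intro _ m hm hms
    rcases Nat.eq_zero_or_pos j with hj0 | hjpos
    · -- base case: j + 1 = 1
      subst hj0
      rw [hBj 1 m (by omega) (by omega) hm hms]
      rw [neg_inj]
      have L : ∀ t ∈ Finset.range (m - 1),
          pmul d (2 * (t + 1)) (Eb (t + 1)) (EB (m - (t + 1)) 0)
          = -pmul d (2 * (t + 1)) (Eb (t + 1)) (Eb (m - (t + 1))) := by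
        intro t ht
        simp only [Finset.mem_range] at ht
        rw [hB0 (m - (t + 1)) (by omega) (by omega), pmul_neg_right]
      rw [Finset.sum_congr rfl L]
      have R : ∀ u ∈ Finset.range (m - 1),
          pmul d (2 * (m - (u + 1))) (EB (m - (u + 1)) 0) (Eb (u + 1))
          = -pmul d (2 * (m - (u + 1))) (Eb (m - (u + 1))) (Eb (u + 1)) := by
        intro u hu
        simp only [Finset.mem_range] at hu
        rw [hB0 (m - (u + 1)) (by omega) (by omega), pmul_neg_left]
      rw [Finset.sum_congr rfl R]
      rw [← Finset.sum_range_reflect]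
      refine Finset.sum_congr rfl fun t ht => ?_
      simp only [Finset.mem_range] at ht
      rw [show m - 1 - 1 - t + 1 = m - (t + 1) from by omega,
        show m - (m - (t + 1)) = t + 1 from by omega]
    · -- inductive step: from j ≥ 1 to j + 1
      have hsub : j + 1 - 1 = j := rfl
      set N := m - (j + 1) with hN
      set P : ℕ → ℕ → UU d := fun t u =>
        pmul d (2 * (m - (u + 1)))
          (pmul d (2 * (t + 1)) (Eb (t + 1)) (EB (m - (t + 1) - (u + 1)) (j - 1)))
          (Eb (u + 1)) with hP
      have hL : EB m (j + 1) = ∑ u ∈ Finset.range N, ∑ t ∈ Finset.range (N - u), P t u := by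
        rw [hBj (j + 1) m (by omega) (by omega) hm hms, hsub]
        have step1 : ∀ t ∈ Finset.range N,
            pmul d (2 * (t + 1)) (Eb (t + 1)) (EB (m - (t + 1)) j)
            = -(∑ u ∈ Finset.range (N - t), P t u) := by
          intro t ht
          simp only [Finset.mem_range] at ht
          rw [ih hjpos (m - (t + 1)) (by omega) (by omega), pmul_neg_right, pmul_sum_right]
          rw [show m - (t + 1) - j = N - t from by omega]
          congr 1
          refine Finset.sum_congr rfl fun u hu => ?_
          simp only [Finset.mem_range] at hu
          simp only [hP]
          rw [pmul_assoc,
            show 2 * (t + 1) + 2 * (m - (t + 1) - (u + 1)) = 2 * (m - (u + 1)) from by omega]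
        rw [Finset.sum_congr rfl step1, Finset.sum_neg_distrib, neg_neg, tri]
      rw [hL, hsub]
      have stepR : ∀ u ∈ Finset.range N,
          pmul d (2 * (m - (u + 1))) (EB (m - (u + 1)) j) (Eb (u + 1))
          = -(∑ t ∈ Finset.range (N - u), P t u) := by
        intro u hu
        simp only [Finset.mem_range] at hu
        rw [hBj j (m - (u + 1)) (by omega) (by omega) (by omega) (by omega),
          pmul_neg_left, pmul_sum_left]
        rw [show m - (u + 1) - j = N - u from by omega]
        congr 1
        refine Finset.sum_congr rfl fun t ht => ?_
        simp only [Finset.mem_range] at ht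
        simp only [hP]
        rw [show m - (u + 1) - (t + 1) = m - (t + 1) - (u + 1) from by omega]
      rw [Finset.sum_congr rfl stepR, Finset.sum_neg_distrib, neg_neg]

lemma key (d s : ℕ) (hs : 1 ≤ s) (Ea Eb : ℕ → UU d) (EB : ℕ → ℕ → UU d)
    (hB0 : ∀ m, 1 ≤ m → m ≤ s → EB m 0 = -(Eb m))
    (hBj : ∀ j m, 1 ≤ j → j ≤ s - 1 → j + 1 ≤ m → m ≤ s →
      EB m j = -(∑ t ∈ Finset.range (m - j),
        pmul d (2 * (t + 1)) (Eb (t + 1)) (EB (m - (t + 1)) (j - 1))))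
    (Ec : ℕ → UU d) (hc0 : Ec 0 = Ea 0)
    (hcr : ∀ m, 1 ≤ m → m ≤ s →
      Ec m = Ea m - ∑ t ∈ Finset.range m, pmul d (2 * t + 2) (Ec t) (Eb (m - t)))
    (Ect : ℕ → UU d) (hct0 : Ect 0 = Ea 0)
    (hctr : ∀ m, 1 ≤ m → m ≤ s →
      Ect m = Ea m + ∑ j ∈ Finset.range m, ∑ t ∈ Finset.range (m - j),
        pmul d (2 * t + 2) (Ea t) (EB (m - t) j)) :
    ∀ m, m ≤ s → Ect m = Ec m := by
  intro m
  induction m using Nat.strong_induction_on with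
  | _ m IH =>
    intro hms
    rcases Nat.eq_zero_or_pos m with rfl | hm1
    · rw [hct0, hc0]
    obtain ⟨n, rfl⟩ : ∃ n, m = n + 1 := ⟨m - 1, by omega⟩
    rw [hctr _ hm1 hms, hcr _ hm1 hms, sub_eq_add_neg]
    -- j = 0 part
    have h0 : (∑ t ∈ Finset.range (n + 1), pmul d (2 * t + 2) (Ea t) (EB (n + 1 - t) 0))
        = -(∑ u ∈ Finset.range (n + 1),
            pmul d (2 * (n - u) + 2) (Ea (n - u)) (Eb (u + 1))) := by
      have e1 : ∀ t ∈ Finset.range (n + 1),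
          pmul d (2 * t + 2) (Ea t) (EB (n + 1 - t) 0)
          = -pmul d (2 * t + 2) (Ea t) (Eb (n + 1 - t)) := by
        intro t ht
        simp only [Finset.mem_range] at ht
        rw [hB0 (n + 1 - t) (by omega) (by omega), pmul_neg_right]
      rw [Finset.sum_congr rfl e1, Finset.sum_neg_distrib, neg_inj,
        ← Finset.sum_range_reflect]
      refine Finset.sum_congr rfl fun u hu => ?_
      simp only [Finset.mem_range] at hu
      rw [show n + 1 - 1 - u = n - u from by omega]
      rw [show 2 * (n - u) + 2 = 2 * (n - u) + 2 from rfl,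
        show n + 1 - (n - u) = u + 1 from by omega]
    -- j ≥ 1 part, inner transform
    have h1 : ∀ j' ∈ Finset.range n,
        (∑ t ∈ Finset.range (n + 1 - (j' + 1)),
          pmul d (2 * t + 2) (Ea t) (EB (n + 1 - t) (j' + 1)))
        = -(∑ u ∈ Finset.range (n - j'), ∑ t ∈ Finset.range (n - j' - u),
            pmul d (2 * (n - u) + 2)
              (pmul d (2 * t + 2) (Ea t) (EB (n - u - t) j')) (Eb (u + 1))) := by
      intro j' hj'
      simp only [Finset.mem_range] at hj'
      rw [show n + 1 - (j' + 1) = n - j' from by omega]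
      have e2 : ∀ t ∈ Finset.range (n - j'),
          pmul d (2 * t + 2) (Ea t) (EB (n + 1 - t) (j' + 1))
          = -(∑ u ∈ Finset.range (n - j' - t),
              pmul d (2 * (n - u) + 2)
                (pmul d (2 * t + 2) (Ea t) (EB (n - u - t) j')) (Eb (u + 1))) := by
        intro t ht
        simp only [Finset.mem_range] at ht
        rw [Brev d s Eb EB hB0 hBj (j' + 1) (by omega) (n + 1 - t) (by omega) (by omega),
          pmul_neg_right, pmul_sum_right]
        rw [show n + 1 - t - (j' + 1) = n - j' - t from by omega]
        congr 1
        refine Finset.sum_congr rfl fun u hu => ?_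
        simp only [Finset.mem_range] at hu
        rw [show (j' + 1 - 1) = j' from rfl, pmul_assoc,
          show 2 * t + 2 + 2 * (n + 1 - t - (u + 1)) = 2 * (n - u) + 2 from by omega,
          show n + 1 - t - (u + 1) = n - u - t from by omega]
      rw [Finset.sum_congr rfl e2, Finset.sum_neg_distrib, neg_inj, tri]
    -- per-u collapse of the j ≥ 1 part
    have h2 : ∀ u ∈ Finset.range n,
        (∑ j' ∈ Finset.range (n - u), ∑ t ∈ Finset.range (n - u - j'),
          pmul d (2 * (n - u) + 2)
            (pmul d (2 * t + 2) (Ea t) (EB (n - u - t) j')) (Eb (u + 1)))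
        = pmul d (2 * (n - u) + 2) (Ec (n - u) - Ea (n - u)) (Eb (u + 1)) := by
      intro u hu
      simp only [Finset.mem_range] at hu
      have e3 : ∀ j' ∈ Finset.range (n - u),
          (∑ t ∈ Finset.range (n - u - j'),
            pmul d (2 * (n - u) + 2)
              (pmul d (2 * t + 2) (Ea t) (EB (n - u - t) j')) (Eb (u + 1)))
          = pmul d (2 * (n - u) + 2)
              (∑ t ∈ Finset.range (n - u - j'),
                pmul d (2 * t + 2) (Ea t) (EB (n - u - t) j')) (Eb (u + 1)) := by
        intro j' _
        rw [pmul_sum_left]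
      rw [Finset.sum_congr rfl e3, ← pmul_sum_left]
      have hct := hctr (n - u) (by omega) (by omega)
      have : (∑ j ∈ Finset.range (n - u), ∑ t ∈ Finset.range (n - u - j),
          pmul d (2 * t + 2) (Ea t) (EB (n - u - t) j)) = Ect (n - u) - Ea (n - u) := by
        rw [hct]; abel
      rw [this, IH (n - u) (by omega) (by omega)]
    have h2' : ∀ u ∈ Finset.range n,
        (∑ j' ∈ Finset.range (n - u), ∑ t ∈ Finset.range (n - j' - u),
          pmul d (2 * (n - u) + 2)
            (pmul d (2 * t + 2) (Ea t) (EB (n - u - t) j')) (Eb (u + 1)))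
        = pmul d (2 * (n - u) + 2) (Ec (n - u) - Ea (n - u)) (Eb (u + 1)) := by
      intro u hu
      rw [← h2 u hu]
      refine Finset.sum_congr rfl fun j' hj' => ?_
      rw [show n - j' - u = n - u - j' from by omega]
    -- assemble
    rw [Finset.sum_range_succ']
    rw [Finset.sum_congr rfl h1, Finset.sum_neg_distrib, tri, Finset.sum_congr rfl h2']
    simp only [Nat.sub_zero]
    rw [h0]
    -- now: -(∑ u ∈ range n, pmul (Ec (n-u) - Ea (n-u)) (Eb (u+1)))
    --      + -(∑ u ∈ range (n+1), pmul (Ea (n-u)) (Eb (u+1)))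
    --    = -(∑ t ∈ range (n+1), pmul (2t+2) (Ec t) (Eb (n+1-t)))
    have hSc : (∑ t ∈ Finset.range (n + 1), pmul d (2 * t + 2) (Ec t) (Eb (n + 1 - t)))
        = ∑ u ∈ Finset.range (n + 1),
            pmul d (2 * (n - u) + 2) (Ec (n - u)) (Eb (u + 1)) := by
      rw [← Finset.sum_range_reflect]
      refine Finset.sum_congr rfl fun u hu => ?_
      simp only [Finset.mem_range] at hu
      rw [show n + 1 - 1 - u = n - u from by omega,
        show n + 1 - (n - u) = u + 1 from by omega]
    rw [hSc, Finset.sum_range_succ, Finset.sum_range_succ (fun u =>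
      pmul d (2 * (n - u) + 2) (Ec (n - u)) (Eb (u + 1)))]
    have e4 : ∀ u ∈ Finset.range n,
        pmul d (2 * (n - u) + 2) (Ec (n - u) - Ea (n - u)) (Eb (u + 1))
        = pmul d (2 * (n - u) + 2) (Ec (n - u)) (Eb (u + 1))
          - pmul d (2 * (n - u) + 2) (Ea (n - u)) (Eb (u + 1)) := by
      intro u _; rw [pmul_sub_left]
    rw [Finset.sum_congr rfl e4, Finset.sum_sub_distrib,
      show n - n = 0 from by omega, hc0]
    abel

/-- Lemma 5.6: with `a m` playing the role of `a^{2m} ∈ Ten^{2m+2}`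
(`a 0 = a^0 = c^0`), `b m` the role of `b^{2m} ∈ Ten^{2m}`, `B m j` the role of
`B^m(j) ∈ Ten^{2m}` defined by `B^m(0) = −b^{2m}` and
`B^m(j) = −Σ_{t=1}^{m−j} b^{2t} ⊗ B^{m−t}(j−1)`, `c` defined by `c^0 = a^0`,
`c^m = a^{2m} − Σ_{ℓ=0}^{m−1} c^ℓ ⊗ b^{2(m−ℓ)}`, and `c̃` defined by `c̃^0 = a^0`,
`c̃^m = a^{2m} + Σ_{j=1}^{m} Σ_{t=0}^{m−j} a^{2t} ⊗ B^{m−t}(j−1)`, one has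
`c̃^m =_S c^m`, i.e. `S^{2m+2}(c̃^m) = S^{2m+2}(c^m)`, for all `0 ≤ m ≤ s`. -/
theorem stmt3 (d s : ℕ) (hd : 1 ≤ d) (hs : 1 ≤ s)
    (a : (m : ℕ) → Ten d (2 * m + 2))
    (b : (m : ℕ) → Ten d (2 * m))
    (B : (m j : ℕ) → Ten d (2 * m))
    (hB0 : ∀ m, 1 ≤ m → m ≤ s → B m 0 = -(b m))
    (hBj : ∀ j m, 1 ≤ j → j ≤ s - 1 → j + 1 ≤ m → m ≤ s →
      B m j = -(∑ t : Fin (m - j),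
        castTen (by have h := t.2; omega)
          (tmul (b (t.1 + 1)) (B (m - (t.1 + 1)) (j - 1)))))
    (c : (m : ℕ) → Ten d (2 * m + 2))
    (hc0 : c 0 = a 0)
    (hcr : ∀ m, 1 ≤ m → m ≤ s →
      c m = a m - ∑ t : Fin m,
        castTen (by have h := t.2; omega) (tmul (c t.1) (b (m - t.1))))
    (ct : (m : ℕ) → Ten d (2 * m + 2))
    (hct0 : ct 0 = a 0)
    (hctr : ∀ m, 1 ≤ m → m ≤ s →
      ct m = a m + ∑ j : Fin m, ∑ t : Fin (m - (j.1 + 1) + 1),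
        castTen (by have h := t.2; have h2 := j.2; omega)
          (tmul (a t.1) (B (m - t.1) j.1))) :
    ∀ m ≤ s, symTen (ct m) = symTen (c m) := by
  have main := key d s hs (fun m => Emb d (2 * m + 2) (a m)) (fun m => Emb d (2 * m) (b m))
    (fun m j => Emb d (2 * m) (B m j))
    (fun m h1 h2 => by rw [hB0 m h1 h2]; rfl)
    (fun j m h1 h2 h3 h4 => by
      rw [hBj j m h1 h2 h3 h4, Emb_neg, Emb_sum, ← Fin.sum_univ_eq_sum_range]
      exact congrArg Neg.neg (Finset.sum_congr rfl fun t _ => rfl))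
    (fun m => Emb d (2 * m + 2) (c m))
    (congrArg _ hc0)
    (fun m h1 h2 => by
      rw [hcr m h1 h2, Emb_sub, Emb_sum, ← Fin.sum_univ_eq_sum_range]
      exact congrArg _ (Finset.sum_congr rfl fun t _ => rfl))
    (fun m => Emb d (2 * m + 2) (ct m))
    (congrArg _ hct0)
    (fun m h1 h2 => by
      rw [hctr m h1 h2, Emb_add, Emb_sum, ← Fin.sum_univ_eq_sum_range]
      refine congrArg _ (Finset.sum_congr rfl fun j _ => ?_)
      rw [Emb_sum, show m - (j : ℕ) = m - ((j : ℕ) + 1) + 1 from by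
          have := j.2; omega,
        ← Fin.sum_univ_eq_sum_range]
      exact Finset.sum_congr rfl fun t _ => rfl)
  intro m hms
  exact congrArg symTen (Emb_inj hd (main m hms))
end

section
/- Let r ≥ 1 and let V be a real vector space. Suppose given families A^1,…,A^{2r+1}, B^0,…,B^{2r}, C^0,…,C^{2r} in V and elements z(j,k) ∈ V for 0 ≤ j,k ≤ 2r, and set D^k = Σ_{j=1}^{k} z(j,k) (so D^0 = 0). Assume: (i) A^{k+1} = A^{2r+1−k} for all 0 ≤ k ≤ 2r; (ii) C^k = C^{2r−k} for all 0 ≤ k ≤ 2r; (iii) A^1 = −B^0; (iv) A^{k+1} = −B^k + B^{2r+1−k} + C^{k−1} − D^{k−1} for all 1 ≤ k ≤ 2r; (v) z(2r−ℓ, 2r−k) = z(k,ℓ) for all 0 ≤ k,ℓ ≤ 2r; (vi) (−1)^k z(k,ℓ) = (−1)^ℓ z(k,ℓ) for all 0 ≤ k,ℓ ≤ 2r. Then B^0 + C^0 = (−1)^r (C^r − A^{r+1}) + H, where H = Σ_{j=1}^{r} Σ_{k=1}^{r} (−1)^{k+1} z(j, 2r−k). (This is the algebraic core of Theorem 3.4: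 with A^{k+1}, B^k, C^k, D^k the cell-averaged quantities built from the correctors, it yields the decomposition g^{2r} =_S (−1)^r k^r + h^r.) -/
private lemma tele {V : Type*} [AddCommGroup V] [Module ℝ V] (f : ℕ → V) (n : ℕ) :
    ∑ k ∈ Finset.Icc 1 n, ((-1 : ℝ) ^ (k + 1)) • (f (k + 1) + f k)
      = f 1 + ((-1 : ℝ) ^ (n + 1)) • f (n + 1) := by
  induction n with
  | zero => simp
  | succ n ih =>
    rw [Finset.sum_Icc_succ_top (by omega), ih]
    have hp : ((-1 : ℝ)) ^ (n + 1 + 1) = -((-1 : ℝ) ^ (n + 1)) := by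
      rw [pow_succ]; ring
    rw [hp]
    module


/-- algebraic core of Theorem 3.4: in a real vector space `V`, given
families `A^{k+1}`, `B^k`, `C^k`, elements `z(j,k)` and `D^k = Σ_{j=1}^k z(j,k)`
satisfying the palindromic symmetries `A^{k+1} = A^{2r+1−k}`, `C^k = C^{2r−k}`, the
relations `A^1 = −B^0`, `A^{k+1} = −B^k + B^{2r+1−k} + C^{k−1} − D^{k−1}` (1 ≤ k ≤ 2r),
`z(2r−ℓ,2r−k) = z(k,ℓ)` and `(−1)^k z(k,ℓ) = (−1)^ℓ z(k,ℓ)`, one has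
`B^0 + C^0 = (−1)^r (C^r − A^{r+1}) + H` with
`H = Σ_{j=1}^r Σ_{k=1}^r (−1)^{k+1} z(j, 2r−k)`. -/
theorem stmt4 (r : ℕ) (hr : 1 ≤ r) (V : Type*) [AddCommGroup V] [Module ℝ V]
    (A B C : ℕ → V) (z : ℕ → ℕ → V) (D : ℕ → V)
    (hD : ∀ k, D k = ∑ j ∈ Finset.Icc 1 k, z j k)
    (hA : ∀ k ≤ 2 * r, A (k + 1) = A (2 * r + 1 - k))
    (hC : ∀ k ≤ 2 * r, C k = C (2 * r - k))
    (hAB : A 1 = -B 0)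
    (hrec : ∀ k, 1 ≤ k → k ≤ 2 * r →
      A (k + 1) = -B k + B (2 * r + 1 - k) + C (k - 1) - D (k - 1))
    (hz1 : ∀ k ≤ 2 * r, ∀ l ≤ 2 * r, z (2 * r - l) (2 * r - k) = z k l)
    (hz2 : ∀ k ≤ 2 * r, ∀ l ≤ 2 * r, ((-1 : ℝ) ^ k) • z k l = ((-1 : ℝ) ^ l) • z k l) :
    B 0 + C 0 = ((-1 : ℝ) ^ r) • (C r - A (r + 1)) +
      ∑ j ∈ Finset.Icc 1 r, ∑ k ∈ Finset.Icc 1 r, ((-1 : ℝ) ^ (k + 1)) • z j (2 * r - k) := by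
  -- Step A: the key symmetrized recursion
  have key : ∀ k, 1 ≤ k → k ≤ r →
      A (k + 1) + A k = C k + C (k - 1) - D (k - 1) - D (2 * r - k) := by
    intro k hk1 hkr
    have h1 := hrec k hk1 (by omega)
    have h2 := hrec (2 * r + 1 - k) (by omega) (by omega)
    have e1 : 2 * r + 1 - (2 * r + 1 - k) = k := by omega
    have e2 : A (2 * r + 1 - k + 1) = A k := by
      rw [hA (2 * r + 1 - k) (by omega), e1]
    have e4 : 2 * r + 1 - k - 1 = 2 * r - k := by omega
    rw [e2, e1, e4] at h2
    have e3 : C (2 * r - k) = C k := (hC k (by omega)).symm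
    rw [e3] at h2
    rw [h1, h2]; abel
  -- Step B: telescoping
  have T1 := tele A r
  have T2 : ∑ k ∈ Finset.Icc 1 r, ((-1 : ℝ) ^ (k + 1)) • (C k + C (k - 1))
      = C 0 + ((-1 : ℝ) ^ (r + 1)) • C r := by
    have := tele (fun k => C (k - 1)) r
    simpa using this
  have Emain : A 1 + ((-1 : ℝ) ^ (r + 1)) • A (r + 1)
      = C 0 + ((-1 : ℝ) ^ (r + 1)) • C r
        - ∑ k ∈ Finset.Icc 1 r, ((-1 : ℝ) ^ (k + 1)) • (D (k - 1) + D (2 * r - k)) := by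
    rw [← T1, ← T2, ← Finset.sum_sub_distrib]
    apply Finset.sum_congr rfl
    intro k hk
    rw [Finset.mem_Icc] at hk
    rw [key k hk.1 hk.2, ← smul_sub]
    congr 1
    abel
  -- Step C: the double-sum identity
  have hpar : ∀ k ≤ 2 * r, ∀ m ≤ 2 * r,
      ((-1 : ℝ) ^ (k + 1)) • z k m = -(((-1 : ℝ) ^ m) • z k m) := by
    intro k hk m hm
    have h := hz2 k hk m hm
    rw [pow_succ, mul_comm, mul_smul, h, neg_one_smul]
  -- S1 rewritten
  have S1eq : ∑ k ∈ Finset.Icc 1 r, ((-1 : ℝ) ^ (k + 1)) • D (k - 1)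
      = ∑ m ∈ Finset.Icc 1 (r - 1), ((-1 : ℝ) ^ m) • ∑ k ∈ Finset.Icc 1 m, z k m := by
    have step1 : ∑ k ∈ Finset.Icc 1 r, ((-1 : ℝ) ^ (k + 1)) • D (k - 1)
        = ∑ l ∈ Finset.Icc 0 (r - 1), ((-1 : ℝ) ^ l) • D l := by
      apply Finset.sum_nbij' (fun k => k - 1) (fun l => l + 1)
      · intro a ha; rw [Finset.mem_Icc] at *; omega
      · intro a ha; rw [Finset.mem_Icc] at *; omega
      · intro a ha; rw [Finset.mem_Icc] at ha; omega
      · intro a ha; rw [Finset.mem_Icc] at ha; omega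
      · intro a ha
        rw [Finset.mem_Icc] at ha
        have : a + 1 = (a - 1) + 2 := by omega
        rw [this, pow_add]
        norm_num
    rw [step1]
    have h0 : Finset.Icc 0 (r - 1) = insert 0 (Finset.Icc 1 (r - 1)) := by
      ext x; simp [Finset.mem_Icc, Finset.mem_insert]; omega
    rw [h0, Finset.sum_insert (by simp)]
    have hD0 : D 0 = 0 := by rw [hD]; simp
    rw [hD0]
    simp only [smul_zero, zero_add]
    apply Finset.sum_congr rfl
    intro m hm
    rw [hD]
  -- S2' rewritten
  have S2'eq : ∑ k ∈ Finset.Icc 1 r, ((-1 : ℝ) ^ (k + 1)) • ∑ j ∈ Finset.Ioc r (2 * r - k), z j (2 * r - k)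
      = -(∑ m ∈ Finset.Icc 1 (r - 1), ((-1 : ℝ) ^ m) • ∑ k ∈ Finset.Icc 1 m, z k m) := by
    have inner : ∀ k ∈ Finset.Icc 1 r,
        ((-1 : ℝ) ^ (k + 1)) • ∑ j ∈ Finset.Ioc r (2 * r - k), z j (2 * r - k)
        = ∑ m ∈ Finset.Icc k (r - 1), ((-1 : ℝ) ^ (k + 1)) • z k m := by
      intro k hk
      rw [Finset.mem_Icc] at hk
      rw [Finset.smul_sum]
      apply Finset.sum_nbij' (fun j => 2 * r - j) (fun m => 2 * r - m)
      · intro a ha; rw [Finset.mem_Ioc] at ha; rw [Finset.mem_Icc]; omega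
      · intro a ha; rw [Finset.mem_Icc] at ha; rw [Finset.mem_Ioc]; omega
      · intro a ha; rw [Finset.mem_Ioc] at ha; omega
      · intro a ha; rw [Finset.mem_Icc] at ha; omega
      · intro a ha
        rw [Finset.mem_Ioc] at ha
        congr 1
        have h := hz1 k (by omega) (2 * r - a) (by omega)
        rw [show 2 * r - (2 * r - a) = a by omega] at h
        exact h
    rw [Finset.sum_congr rfl inner]
    rw [Finset.sum_comm' (t' := Finset.Icc 1 (r - 1)) (s' := fun m => Finset.Icc 1 m)
      (by intro x y; simp only [Finset.mem_Icc]; omega)]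
    rw [← Finset.sum_neg_distrib]
    apply Finset.sum_congr rfl
    intro m hm
    rw [Finset.mem_Icc] at hm
    rw [Finset.smul_sum, ← Finset.sum_neg_distrib]
    apply Finset.sum_congr rfl
    intro k hk
    rw [Finset.mem_Icc] at hk
    exact hpar k (by omega) m (by omega)
  -- splitting S2
  have S2eq : ∑ k ∈ Finset.Icc 1 r, ((-1 : ℝ) ^ (k + 1)) • D (2 * r - k)
      = (∑ j ∈ Finset.Icc 1 r, ∑ k ∈ Finset.Icc 1 r, ((-1 : ℝ) ^ (k + 1)) • z j (2 * r - k))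
        + ∑ k ∈ Finset.Icc 1 r, ((-1 : ℝ) ^ (k + 1)) • ∑ j ∈ Finset.Ioc r (2 * r - k), z j (2 * r - k) := by
    have split : ∀ k ∈ Finset.Icc 1 r,
        ((-1 : ℝ) ^ (k + 1)) • D (2 * r - k)
        = (∑ j ∈ Finset.Icc 1 r, ((-1 : ℝ) ^ (k + 1)) • z j (2 * r - k))
          + ((-1 : ℝ) ^ (k + 1)) • ∑ j ∈ Finset.Ioc r (2 * r - k), z j (2 * r - k) := by
      intro k hk
      rw [Finset.mem_Icc] at hk
      rw [hD]
      have hsplit : Finset.Icc 1 (2 * r - k) = Finset.Icc 1 r ∪ Finset.Ioc r (2 * r - k) := by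
        ext x; simp only [Finset.mem_Icc, Finset.mem_Ioc, Finset.mem_union]; omega
      have hdisj : Disjoint (Finset.Icc 1 r) (Finset.Ioc r (2 * r - k)) := by
        rw [Finset.disjoint_left]
        intro a ha hb
        rw [Finset.mem_Icc] at ha; rw [Finset.mem_Ioc] at hb; omega
      rw [hsplit, Finset.sum_union hdisj, smul_add, Finset.smul_sum]
    rw [Finset.sum_congr rfl split, Finset.sum_add_distrib]
    congr 1
    exact Finset.sum_comm
  -- assemble step C
  have stepC : ∑ k ∈ Finset.Icc 1 r, ((-1 : ℝ) ^ (k + 1)) • (D (k - 1) + D (2 * r - k))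
      = ∑ j ∈ Finset.Icc 1 r, ∑ k ∈ Finset.Icc 1 r, ((-1 : ℝ) ^ (k + 1)) • z j (2 * r - k) := by
    have expand : ∑ k ∈ Finset.Icc 1 r, ((-1 : ℝ) ^ (k + 1)) • (D (k - 1) + D (2 * r - k))
        = (∑ k ∈ Finset.Icc 1 r, ((-1 : ℝ) ^ (k + 1)) • D (k - 1))
          + ∑ k ∈ Finset.Icc 1 r, ((-1 : ℝ) ^ (k + 1)) • D (2 * r - k) := by
      rw [← Finset.sum_add_distrib]
      apply Finset.sum_congr rfl
      intro k _; rw [smul_add]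
    rw [expand, S1eq, S2eq, S2'eq]
    abel
  -- finish
  rw [← stepC]
  linear_combination (norm := module) -Emain + hAB
end

section
/- Let r ≥ 1, let V be a real vector space, and let z(j,k) ∈ V be given for 0 ≤ j,k ≤ 2r, satisfying: (a) z(2r−ℓ, 2r−k) = z(k,ℓ) for all 0 ≤ k,ℓ ≤ 2r, and (b) (−1)^k z(k,ℓ) = (−1)^ℓ z(k,ℓ) for all 0 ≤ k,ℓ ≤ 2r. Define D^k = Σ_{j=1}^{k} z(j,k) for 0 ≤ k ≤ 2r and H = Σ_{j=1}^{r} Σ_{k=1}^{r} (−1)^{k+1} z(j, 2r−k). Then Σ_{k=1}^{r} (−1)^k D^{2r−k} = Σ_{k=1}^{r−1} (−1)^k D^k − H (where for r = 1 the sum on the right-hand side is empty). -/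
/-- Lemma 5.12: in a real vector space, given `z(j,k)` for
`0 ≤ j,k ≤ 2r` with `z(2r−ℓ,2r−k) = z(k,ℓ)` and `(−1)^k z(k,ℓ) = (−1)^ℓ z(k,ℓ)`, setting
`D^k = Σ_{j=1}^k z(j,k)` and `H = Σ_{j=1}^r Σ_{k=1}^r (−1)^{k+1} z(j,2r−k)`, one has
`Σ_{k=1}^r (−1)^k D^{2r−k} = Σ_{k=1}^{r−1} (−1)^k D^k − H`. -/
theorem stmt15 (r : ℕ) (hr : 1 ≤ r) (V : Type*) [AddCommGroup V] [Module ℝ V]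
    (z : ℕ → ℕ → V)
    (hz1 : ∀ k ≤ 2 * r, ∀ l ≤ 2 * r, z (2 * r - l) (2 * r - k) = z k l)
    (hz2 : ∀ k ≤ 2 * r, ∀ l ≤ 2 * r, ((-1 : ℝ) ^ k) • z k l = ((-1 : ℝ) ^ l) • z k l)
    (D : ℕ → V) (hD : ∀ k ≤ 2 * r, D k = ∑ j ∈ Finset.Icc 1 k, z j k)
    (H : V)
    (hH : H = ∑ j ∈ Finset.Icc 1 r, ∑ k ∈ Finset.Icc 1 r,
      ((-1 : ℝ) ^ (k + 1)) • z j (2 * r - k)) :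
    ∑ k ∈ Finset.Icc 1 r, ((-1 : ℝ) ^ k) • D (2 * r - k) =
      ∑ k ∈ Finset.Icc 1 (r - 1), ((-1 : ℝ) ^ k) • D k - H := by
  have key : ∀ k ∈ Finset.Icc 1 r, ((-1:ℝ)^k) • D (2*r-k)
      = (∑ j ∈ Finset.Icc 1 r, ((-1:ℝ)^k) • z j (2*r-k))
        + ∑ m ∈ Finset.Icc k (r-1), ((-1:ℝ)^m) • z k m := by
    intro k hk
    simp only [Finset.mem_Icc] at hk
    rw [hD _ (by omega)]
    have e1 : Finset.Icc 1 (2*r-k) = Finset.Ioc 0 (2*r-k) := by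
      rw [← Finset.Icc_add_one_left_eq_Ioc]; rfl
    have e2 : Finset.Icc 1 r = Finset.Ioc 0 r := by
      rw [← Finset.Icc_add_one_left_eq_Ioc]; rfl
    rw [e1, ← Finset.sum_Ioc_consecutive _ (Nat.zero_le r) (by omega : r ≤ 2*r-k),
      smul_add, e2, Finset.smul_sum]
    congr 1
    rw [Finset.smul_sum,
      show Finset.Ioc r (2*r-k) = Finset.Icc (r+1) (2*r-k) from (Finset.Icc_add_one_left_eq_Ioc _ _).symm]
    apply Finset.sum_nbij' (i := fun j => 2*r - j) (j := fun m => 2*r - m)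
    · intro j hj; simp only [Finset.mem_Icc] at *; omega
    · intro m hm; simp only [Finset.mem_Icc] at *; omega
    · intro j hj; simp only [Finset.mem_Icc] at hj; omega
    · intro m hm; simp only [Finset.mem_Icc] at hm; omega
    · intro j hj
      simp only [Finset.mem_Icc] at hj
      have h1 := hz1 k (by omega) (2*r - j) (by omega)
      rw [show 2*r - (2*r - j) = j by omega] at h1
      rw [h1, hz2 k (by omega) (2*r - j) (by omega)]
  rw [Finset.sum_congr rfl key, Finset.sum_add_distrib]
  have hA : ∑ k ∈ Finset.Icc 1 r, ∑ j ∈ Finset.Icc 1 r, ((-1:ℝ)^k) • z j (2*r-k) = -H := by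
    rw [hH, Finset.sum_comm, ← Finset.sum_neg_distrib]
    apply Finset.sum_congr rfl; intro k _
    rw [← Finset.sum_neg_distrib]
    apply Finset.sum_congr rfl; intro j _
    rw [pow_succ, mul_smul]
    simp
  have hB : ∑ k ∈ Finset.Icc 1 r, ∑ m ∈ Finset.Icc k (r-1), ((-1:ℝ)^m) • z k m
      = ∑ m ∈ Finset.Icc 1 (r-1), ((-1:ℝ)^m) • D m := by
    rw [Finset.sum_comm' (s' := fun m => Finset.Icc 1 m) (t' := Finset.Icc 1 (r-1))
        (fun k m => by simp only [Finset.mem_Icc]; omega)]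
    apply Finset.sum_congr rfl
    intro m hm
    simp only [Finset.mem_Icc] at hm
    rw [hD m (by omega), Finset.smul_sum]
  rw [hA, hB]
  abel
end

section
/- Let r ≥ 1, let V be a real vector space, and let z(j,k) ∈ V be given for 0 ≤ j,k ≤ 2r, satisfying z(2r−ℓ, 2r−k) = z(k,ℓ) and (−1)^k z(k,ℓ) = (−1)^ℓ z(k,ℓ) for all 0 ≤ k,ℓ ≤ 2r. Define D^k = Σ_{j=1}^{k} z(j,k) (so D^0 = 0) and H = Σ_{j=1}^{r} Σ_{k=1}^{r} (−1)^{k+1} z(j, 2r−k). With the signs σ^k = (−1)^{k+1} for 0 ≤ k ≤ r and σ^k = (−1)^k for r < k ≤ 2r, one has Σ_{k=1}^{2r} σ^k D^{k−1} = H. -/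
/-- in a real vector space, given `z(j,k)` for `0 ≤ j,k ≤ 2r` with
`z(2r−ℓ,2r−k) = z(k,ℓ)` and `(−1)^k z(k,ℓ) = (−1)^ℓ z(k,ℓ)`, setting
`D^k = Σ_{j=1}^k z(j,k)` (so `D^0 = 0`) and
`H = Σ_{j=1}^r Σ_{k=1}^r (−1)^{k+1} z(j,2r−k)`, with the signs `σ^k = (−1)^{k+1}` for
`k ≤ r`, `σ^k = (−1)^k` for `k > r`, one has `Σ_{k=1}^{2r} σ^k D^{k−1} = H`. -/
theorem stmt16 (r : ℕ) (hr : 1 ≤ r) (V : Type*) [AddCommGroup V] [Module ℝ V]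
    (z : ℕ → ℕ → V)
    (hz1 : ∀ k ≤ 2 * r, ∀ l ≤ 2 * r, z (2 * r - l) (2 * r - k) = z k l)
    (hz2 : ∀ k ≤ 2 * r, ∀ l ≤ 2 * r, ((-1 : ℝ) ^ k) • z k l = ((-1 : ℝ) ^ l) • z k l)
    (D : ℕ → V) (hD : ∀ k ≤ 2 * r, D k = ∑ j ∈ Finset.Icc 1 k, z j k)
    (H : V)
    (hH : H = ∑ j ∈ Finset.Icc 1 r, ∑ k ∈ Finset.Icc 1 r,
      ((-1 : ℝ) ^ (k + 1)) • z j (2 * r - k)) :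
    ∑ k ∈ Finset.Icc 1 (2 * r),
        (if k ≤ r then ((-1 : ℝ) ^ (k + 1)) else ((-1 : ℝ) ^ k)) • D (k - 1) = H := by
  have hsign : ∀ a b : ℕ, a % 2 = b % 2 → ((-1 : ℝ)) ^ a = (-1) ^ b := by
    intro a b hab
    rw [← Nat.div_add_mod a 2, ← Nat.div_add_mod b 2, pow_add, pow_add, pow_mul, pow_mul]
    norm_num [hab]
  have hIcc : ∀ n : ℕ, Finset.Icc 1 n = Finset.Ioc 0 n := fun n => by
    rw [← Finset.Icc_add_one_left_eq_Ioc, zero_add]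
  rw [hIcc, ← Finset.sum_Ioc_consecutive _ (Nat.zero_le r) (by omega : r ≤ 2 * r)]
  have hA : ∑ k ∈ Finset.Ioc 0 r,
      (if k ≤ r then ((-1 : ℝ) ^ (k + 1)) else ((-1 : ℝ) ^ k)) • D (k - 1)
      = ∑ k ∈ Finset.Ioc 0 r, ((-1 : ℝ) ^ (k + 1)) • ∑ j ∈ Finset.Ioc 0 (k - 1), z j (k - 1) := by
    refine Finset.sum_congr rfl fun k hk => ?_
    simp only [Finset.mem_Ioc] at hk
    rw [if_pos hk.2, hD (k - 1) (by omega), hIcc]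
  have hB : ∑ k ∈ Finset.Ioc r (2 * r),
      (if k ≤ r then ((-1 : ℝ) ^ (k + 1)) else ((-1 : ℝ) ^ k)) • D (k - 1)
      = (∑ k ∈ Finset.Ioc r (2 * r), ((-1 : ℝ) ^ k) • ∑ j ∈ Finset.Ioc 0 r, z j (k - 1))
        + ∑ k ∈ Finset.Ioc r (2 * r), ((-1 : ℝ) ^ k) • ∑ j ∈ Finset.Ioc r (k - 1), z j (k - 1) := by
    rw [← Finset.sum_add_distrib]
    refine Finset.sum_congr rfl fun k hk => ?_
    simp only [Finset.mem_Ioc] at hk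
    rw [if_neg (by omega), hD (k - 1) (by omega), hIcc,
      ← Finset.sum_Ioc_consecutive _ (Nat.zero_le r) (by omega : r ≤ k - 1), smul_add]
  rw [hA, hB]
  have hH' : ∑ k ∈ Finset.Ioc r (2 * r), ((-1 : ℝ) ^ k) • ∑ j ∈ Finset.Ioc 0 r, z j (k - 1)
      = H := by
    rw [hH, Finset.sum_comm]
    refine Finset.sum_nbij' (fun k => 2 * r + 1 - k) (fun k => 2 * r + 1 - k)
      ?_ ?_ ?_ ?_ ?_
    · intro k hk
      simp only [Finset.mem_Ioc] at hk
      simp only [Finset.mem_Icc]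
      omega
    · intro k hk
      simp only [Finset.mem_Icc] at hk
      simp only [Finset.mem_Ioc]
      omega
    · intro k hk
      simp only [Finset.mem_Ioc] at hk
      omega
    · intro k hk
      simp only [Finset.mem_Icc] at hk
      omega
    · intro k hk
      simp only [Finset.mem_Ioc] at hk
      rw [Finset.smul_sum]
      refine Finset.sum_congr rfl fun j hj => ?_
      rw [show 2 * r - (2 * r + 1 - k) = k - 1 from by omega,
        hsign k (2 * r + 1 - k + 1) (by omega)]
  have hAC : (∑ k ∈ Finset.Ioc 0 r, ((-1 : ℝ) ^ (k + 1)) • ∑ j ∈ Finset.Ioc 0 (k - 1), z j (k - 1))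
      + (∑ k ∈ Finset.Ioc r (2 * r), ((-1 : ℝ) ^ k) • ∑ j ∈ Finset.Ioc r (k - 1), z j (k - 1))
      = 0 := by
    have hC : ∑ k ∈ Finset.Ioc r (2 * r), ((-1 : ℝ) ^ k) • ∑ j ∈ Finset.Ioc r (k - 1), z j (k - 1)
        = ∑ k ∈ Finset.Ioc 0 r, (-(((-1 : ℝ) ^ (k + 1)) • ∑ j ∈ Finset.Ioc 0 (k - 1), z j (k - 1))) := by
      simp only [Finset.smul_sum, ← Finset.sum_neg_distrib]
      rw [Finset.sum_sigma', Finset.sum_sigma']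
      refine Finset.sum_nbij' (fun p => ⟨2 * r + 1 - p.2, 2 * r + 1 - p.1⟩)
        (fun p => ⟨2 * r + 1 - p.2, 2 * r + 1 - p.1⟩) ?_ ?_ ?_ ?_ ?_
      · rintro ⟨k, j⟩ hp
        simp only [Finset.mem_sigma, Finset.mem_Ioc] at hp ⊢
        omega
      · rintro ⟨k, j⟩ hp
        simp only [Finset.mem_sigma, Finset.mem_Ioc] at hp ⊢
        omega
      · rintro ⟨k, j⟩ hp
        simp only [Finset.mem_sigma, Finset.mem_Ioc] at hp
        dsimp only
        simp only [Sigma.mk.inj_iff, heq_eq_eq]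
        omega
      · rintro ⟨k, j⟩ hp
        simp only [Finset.mem_sigma, Finset.mem_Ioc] at hp
        dsimp only
        simp only [Sigma.mk.inj_iff, heq_eq_eq]
        omega
      · rintro ⟨k, j⟩ hp
        simp only [Finset.mem_sigma, Finset.mem_Ioc] at hp
        dsimp only
        rw [show (2 * r + 1 - j) - 1 = 2 * r - j from by omega,
          show (2 * r + 1 - k : ℕ) = 2 * r - (k - 1) from by omega,
          hz1 j (by omega) (k - 1) (by omega),
          hsign (2 * r + 1 - j + 1) j (by omega),
          hz2 j (by omega) (k - 1) (by omega),
          show ((-1 : ℝ)) ^ k = -(-1) ^ (k - 1) from by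
            rw [hsign k (k - 1 + 1) (by omega), pow_succ]; ring]
        exact neg_smul _ _
    rw [hC, ← Finset.sum_add_distrib]
    simp
  rw [add_comm (∑ k ∈ Finset.Ioc r (2 * r), ((-1 : ℝ) ^ k) • ∑ j ∈ Finset.Ioc 0 r, z j (k - 1)),
    ← add_assoc, hAC, zero_add, hH']
end
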